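/- arXiv:1509.00987 — 6 statements merged into one kernel-verified Lean document; each statement's English description precedes it below -/
import Mathlib

section
/- Let n ≥ 1 and N ≥ 1 be integers, and let μ be a Borel measure on ℂ^N for which there are constants C₀ > 0 and R > 0 with μ(B_ρ(w)) ≤ C₀ ρ^{2n} for every w ∈ ℂ^N and every 0 < ρ ≤ R. Then there exists a constant C > 0, depending only on n, N, C₀ and R, such that for every z ∈ ℂ^N one has ∫_{B_{1/2}(z)} dμ(ζ) / ( ‖ζ − z‖^{2n} · (log ‖ζ − z‖)² ) ≤ C. -/
/-!
Split the punctured ball `B_{1/2}(z)` into the dyadic shells `ρ/2 ≤ ‖ζ - z‖ < ρ`,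
`ρ = 2^{-(k+1)}`. On such a shell the integrand is at most `2^{2n} / (ρ^{2n} ((k+1) log 2)²)`,
while the shell has measure at most `C ρ^{2n}`, so it contributes `O(1/(k+1)²)`, a summable
sequence. The growth bound, assumed only for radii `≤ R`, holds for all radii `≤ 1/2` with a
larger constant, because every ball of radius `1/2` is covered by translates of one fixed finite
family of balls of radius `R`.
-/

open MeasureTheory Metric
open scoped NNReal ENNReal

theorem exists_pow_div_two_le_lt {t : ℝ} (ht₀ : 0 < t) (ht : t < 2⁻¹) :
    ∃ k : ℕ, 2⁻¹ ^ (k + 1) / 2 ≤ t ∧ t < 2⁻¹ ^ (k + 1) := by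
  have hex : ∃ m : ℕ, (2⁻¹ : ℝ) ^ m ≤ t :=
    (exists_pow_lt_of_lt_one ht₀ (by norm_num : (2⁻¹ : ℝ) < 1)).imp fun _ => le_of_lt
  have h := Nat.find_spec hex
  rcases hm : Nat.find hex with _ | _ | k
  · rw [hm] at h; norm_num at h; linarith
  · rw [hm] at h; norm_num at h; linarith
  · refine ⟨k, ?_, not_le.1 (Nat.find_min hex (by omega : k + 1 < Nat.find hex))⟩
    rw [hm, pow_succ _ (k + 1), ← div_eq_mul_inv] at h
    exact h

theorem one_div_pow_mul_log_sq_le (d : ℕ) {ρ t : ℝ} (hρ₀ : 0 < ρ) (hρ₁ : ρ < 1) (ht : ρ / 2 ≤ t)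
    (htρ : t < ρ) :
    1 / (t ^ d * Real.log t ^ 2) ≤ 2 ^ d / (ρ ^ d * Real.log ρ ^ 2) := by
  have ht₀ : 0 < t := by linarith
  have hlogρ : Real.log ρ < 0 := Real.log_neg hρ₀ hρ₁
  have hlog : Real.log t ≤ Real.log ρ := Real.log_le_log ht₀ htρ.le
  have hsq : Real.log ρ ^ 2 ≤ Real.log t ^ 2 := by nlinarith
  rw [div_le_div_iff₀ (mul_pos (by positivity) (sq_pos_of_neg (hlog.trans_lt hlogρ)))
    (mul_pos (by positivity) (sq_pos_of_neg hlogρ)), one_mul]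
  calc ρ ^ d * Real.log ρ ^ 2 = 2 ^ d * (ρ / 2) ^ d * Real.log ρ ^ 2 := by
        rw [div_pow, mul_div_cancel₀ _ (by positivity)]
    _ ≤ 2 ^ d * (t ^ d * Real.log t ^ 2) := by
        rw [mul_assoc]
        gcongr

theorem hasSum_one_div_nat_succ_sq :
    HasSum (fun k : ℕ => 1 / ((k : ℝ) + 1) ^ 2) (Real.pi ^ 2 / 6) := by
  simpa using (hasSum_nat_add_iff' 1).2 hasSum_zeta_two

section Seminormed

variable {E : Type*} [SeminormedAddCommGroup E]

theorem exists_finset_ball_subset_biUnion_ball_add [ProperSpace E] (ρ : ℝ) {r : ℝ}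
    (hr : 0 < r) :
    ∃ s : Finset E, ∀ w : E, ball w ρ ⊆ ⋃ p ∈ s, ball (w + p) r := by
  obtain ⟨t, -, ht, hcover⟩ := finite_cover_balls_of_compact (isCompact_closedBall (0 : E) ρ) hr
  refine ⟨ht.toFinset, fun w ζ hζ => ?_⟩
  have hζw : ζ - w ∈ closedBall (0 : E) ρ := by
    rw [mem_closedBall, dist_zero_right, ← dist_eq_norm]
    exact (mem_ball.1 hζ).le
  obtain ⟨p, hp, hζp⟩ := Set.mem_iUnion₂.1 (hcover hζw)
  refine Set.mem_biUnion (ht.mem_toFinset.2 hp) ?_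
  rw [mem_ball, dist_eq_norm] at hζp ⊢
  rwa [sub_add_eq_sub_sub]

theorem exists_measure_ball_le_of_measure_small_ball_le [ProperSpace E] {d : ℕ} {C₀ R : ℝ}
    (hC₀ : 0 < C₀) (hR : 0 < R) (ρ₀ : ℝ) :
    ∃ C : ℝ, 0 < C ∧ ∀ {_ : MeasurableSpace E} (μ : Measure E),
      (∀ (w : E) (ρ : ℝ), 0 < ρ → ρ ≤ R → μ (ball w ρ) ≤ ENNReal.ofReal (C₀ * ρ ^ d)) →
      ∀ (w : E) (ρ : ℝ), 0 < ρ → ρ ≤ ρ₀ → μ (ball w ρ) ≤ ENNReal.ofReal (C * ρ ^ d) := by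
  obtain ⟨s, hs⟩ := exists_finset_ball_subset_biUnion_ball_add (E := E) ρ₀ hR
  refine ⟨(s.card + 1) * C₀, by positivity, fun μ hμ w ρ hρ hρρ₀ => ?_⟩
  rcases le_or_gt ρ R with hρR | hRρ
  · refine (hμ w ρ hρ hρR).trans (ENNReal.ofReal_le_ofReal ?_)
    have : C₀ ≤ (s.card + 1) * C₀ :=
      le_mul_of_one_le_left hC₀.le (by linarith [s.card.cast_nonneg (α := ℝ)])
    gcongr
  · calc μ (ball w ρ) ≤ μ (⋃ p ∈ s, ball (w + p) R) :=
          measure_mono ((ball_subset_ball hρρ₀).trans (hs w))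
      _ ≤ ∑ p ∈ s, μ (ball (w + p) R) := measure_biUnion_finset_le _ _
      _ ≤ ∑ _p ∈ s, ENNReal.ofReal (C₀ * R ^ d) := Finset.sum_le_sum fun p _ => hμ _ R hR le_rfl
      _ = ENNReal.ofReal (s.card * (C₀ * R ^ d)) := by
          rw [Finset.sum_const, nsmul_eq_mul, ENNReal.ofReal_mul s.card.cast_nonneg,
            ENNReal.ofReal_natCast]
      _ ≤ ENNReal.ofReal ((s.card + 1) * C₀ * ρ ^ d) := by
          refine ENNReal.ofReal_le_ofReal ?_
          calc (s.card : ℝ) * (C₀ * R ^ d) ≤ (s.card + 1) * (C₀ * ρ ^ d) := by gcongr; linarith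
            _ = _ := by ring

theorem setLIntegral_ball_diff_ball_half_one_div_pow_mul_log_sq_le
    [MeasurableSpace E] [OpensMeasurableSpace E] (μ : Measure E) (d : ℕ) (z : E) {C ρ : ℝ}
    (hρ₀ : 0 < ρ) (hρ₁ : ρ < 1)
    (hμ : μ (ball z ρ) ≤ ENNReal.ofReal (C * ρ ^ d)) :
    ∫⁻ ζ in ball z ρ \ ball z (ρ / 2),
        ENNReal.ofReal (1 / (‖ζ - z‖ ^ d * Real.log ‖ζ - z‖ ^ 2)) ∂μ ≤
      ENNReal.ofReal (C * 2 ^ d / Real.log ρ ^ 2) := by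
  calc ∫⁻ ζ in ball z ρ \ ball z (ρ / 2),
          ENNReal.ofReal (1 / (‖ζ - z‖ ^ d * Real.log ‖ζ - z‖ ^ 2)) ∂μ
      ≤ ∫⁻ _ in ball z ρ \ ball z (ρ / 2),
          ENNReal.ofReal (2 ^ d / (ρ ^ d * Real.log ρ ^ 2)) ∂μ := by
        refine setLIntegral_mono' (measurableSet_ball.diff measurableSet_ball) fun ζ hζ => ?_
        rw [Set.mem_sdiff, mem_ball, mem_ball, not_lt, dist_eq_norm] at hζ
        exact ENNReal.ofReal_le_ofReal (one_div_pow_mul_log_sq_le d hρ₀ hρ₁ hζ.2 hζ.1)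
    _ = ENNReal.ofReal (2 ^ d / (ρ ^ d * Real.log ρ ^ 2)) * μ (ball z ρ \ ball z (ρ / 2)) :=
        setLIntegral_const _ _
    _ ≤ ENNReal.ofReal (2 ^ d / (ρ ^ d * Real.log ρ ^ 2)) * ENNReal.ofReal (C * ρ ^ d) := by
        gcongr
        exact (measure_mono Set.sdiff_subset).trans hμ
    _ = ENNReal.ofReal (C * 2 ^ d / Real.log ρ ^ 2) := by
        rw [← ENNReal.ofReal_mul (by positivity)]
        congr 1
        field_simp

end Seminormed

section Normed

variable {E : Type*} [NormedAddCommGroup E]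

theorem ball_subset_singleton_union_iUnion_ball_diff_ball_half (z : E) :
    ball z (1 / 2) ⊆ {z} ∪ ⋃ k : ℕ, ball z (2⁻¹ ^ (k + 1)) \ ball z (2⁻¹ ^ (k + 1) / 2) := by
  intro ζ hζ
  rcases eq_or_ne ζ z with rfl | hne
  · exact Or.inl rfl
  rw [mem_ball, one_div] at hζ
  obtain ⟨k, hk⟩ := exists_pow_div_two_le_lt (dist_pos.2 hne) hζ
  exact Or.inr (Set.mem_iUnion.2 ⟨k, mem_ball.2 hk.2, fun h => (mem_ball.1 h).not_ge hk.1⟩)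

theorem setLIntegral_ball_one_half_one_div_pow_mul_log_sq_le
    [MeasurableSpace E] [OpensMeasurableSpace E] (μ : Measure E) (d : ℕ) (z : E) {C : ℝ}
    (hC : 0 ≤ C)
    (hμ : ∀ ρ : ℝ, 0 < ρ → ρ ≤ 1 / 2 → μ (ball z ρ) ≤ ENNReal.ofReal (C * ρ ^ d)) :
    ∫⁻ ζ in ball z (1 / 2), ENNReal.ofReal (1 / (‖ζ - z‖ ^ d * Real.log ‖ζ - z‖ ^ 2)) ∂μ ≤
      ENNReal.ofReal (C * 2 ^ d / Real.log 2 ^ 2 * (Real.pi ^ 2 / 6)) := by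
  set f : E → ℝ≥0∞ := fun ζ => ENNReal.ofReal (1 / (‖ζ - z‖ ^ d * Real.log ‖ζ - z‖ ^ 2))
  set c : ℝ := C * 2 ^ d / Real.log 2 ^ 2 with hc
  have hshell (k : ℕ) : ∫⁻ ζ in ball z (2⁻¹ ^ (k + 1)) \ ball z (2⁻¹ ^ (k + 1) / 2), f ζ ∂μ ≤
      ENNReal.ofReal (c * (1 / ((k : ℝ) + 1) ^ 2)) := by
    have hρ₁ : (2⁻¹ : ℝ) ^ (k + 1) ≤ 2⁻¹ :=
      pow_le_of_le_one (by norm_num) (by norm_num) (by omega)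
    convert setLIntegral_ball_diff_ball_half_one_div_pow_mul_log_sq_le μ d z
      (ρ := 2⁻¹ ^ (k + 1)) (by positivity) (by linarith) (hμ _ (by positivity) (by linarith))
      using 2
    rw [Real.log_pow, Real.log_inv, hc]
    push_cast
    field_simp
  calc ∫⁻ ζ in ball z (1 / 2), f ζ ∂μ
      ≤ ∫⁻ ζ in {z}, f ζ ∂μ +
          ∑' k : ℕ, ∫⁻ ζ in ball z (2⁻¹ ^ (k + 1)) \ ball z (2⁻¹ ^ (k + 1) / 2), f ζ ∂μ :=
        (lintegral_mono_set (ball_subset_singleton_union_iUnion_ball_diff_ball_half z)).trans <|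
          (lintegral_union_le _ _ _).trans (add_le_add le_rfl (lintegral_iUnion_le _ _))
    _ ≤ 0 + ∑' k : ℕ, ENNReal.ofReal (c * (1 / ((k : ℝ) + 1) ^ 2)) := by
        gcongr with k
        · -- the integrand vanishes at `z` because `Real.log 0 = 0`
          simp [f]
        · exact hshell k
    _ = ENNReal.ofReal (c * (Real.pi ^ 2 / 6)) := by
        rw [zero_add, ← ENNReal.ofReal_tsum_of_nonneg (fun k => by positivity)
          (hasSum_one_div_nat_succ_sq.mul_left c).summable,
          (hasSum_one_div_nat_succ_sq.mul_left c).tsum_eq]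

end Normed

theorem integral_log_squared_bound_general
    (n N : ℕ) (C₀ R : ℝ) (hC₀ : 0 < C₀) (hR : 0 < R) :
    ∃ C : ℝ, 0 < C ∧
      ∀ [MeasurableSpace (EuclideanSpace ℂ (Fin N))]
        [BorelSpace (EuclideanSpace ℂ (Fin N))]
        (μ : Measure (EuclideanSpace ℂ (Fin N))),
        (∀ (w : EuclideanSpace ℂ (Fin N)) (ρ : ℝ), 0 < ρ → ρ ≤ R →
          μ (ball w ρ) ≤ ENNReal.ofReal (C₀ * ρ ^ (2 * n))) →
        ∀ z : EuclideanSpace ℂ (Fin N),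
          (∫⁻ ζ in ball z (1 / 2),
              ENNReal.ofReal (1 / (‖ζ - z‖ ^ (2 * n) * Real.log ‖ζ - z‖ ^ 2)) ∂μ) ≤
            ENNReal.ofReal C := by
  obtain ⟨C, hC, hball⟩ := exists_measure_ball_le_of_measure_small_ball_le
    (E := EuclideanSpace ℂ (Fin N)) (d := 2 * n) hC₀ hR (1 / 2)
  refine ⟨C * 2 ^ (2 * n) / Real.log 2 ^ 2 * (Real.pi ^ 2 / 6), by positivity, ?_⟩
  intro _ _ μ hμ z
  exact setLIntegral_ball_one_half_one_div_pow_mul_log_sq_le μ (2 * n) z hC.le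
    fun ρ hρ hρ' => hball μ hμ z ρ hρ hρ'

/-- Uniform bound for the integral of `1/(‖ζ - z‖^{2n} (log ‖ζ - z‖)²)` over the ball of
radius `1/2`, for a measure with an upper Ahlfors regularity bound of exponent `2n`
(modelling the volume measure of an `n`-dimensional analytic subvariety of `ℂ^N`). -/
theorem integral_log_squared_bound
    (n N : ℕ) (hn : 1 ≤ n) (hN : 1 ≤ N) (C₀ R : ℝ) (hC₀ : 0 < C₀) (hR : 0 < R) :
    ∃ C : ℝ, 0 < C ∧
      ∀ [MeasurableSpace (EuclideanSpace ℂ (Fin N))]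
        [BorelSpace (EuclideanSpace ℂ (Fin N))]
        (μ : Measure (EuclideanSpace ℂ (Fin N))),
        (∀ (w : EuclideanSpace ℂ (Fin N)) (ρ : ℝ), 0 < ρ → ρ ≤ R →
          μ (ball w ρ) ≤ ENNReal.ofReal (C₀ * ρ ^ (2 * n))) →
        ∀ z : EuclideanSpace ℂ (Fin N),
          (∫⁻ ζ in ball z (1 / 2),
              ENNReal.ofReal (1 / (‖ζ - z‖ ^ (2 * n) * Real.log ‖ζ - z‖ ^ 2)) ∂μ) ≤
            ENNReal.ofReal C :=
  integral_log_squared_bound_general n N C₀ R hC₀ hR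
end

section
/- Let n ≥ 1 and N ≥ 1 be integers, and let μ be a Borel measure on ℂ^N for which there are constants C₀ > 0 and R > 0 with μ(B_ρ(w)) ≤ C₀ ρ^{2n} for every w ∈ ℂ^N and every 0 < ρ ≤ R. For an integer m ≥ 0 set r_m := exp(−e^m). Then there exists a constant C > 0, depending only on n, N, C₀ and R but not on m, such that for every z ∈ ℂ^N and every integer m ≥ 0 one has ∫_{B_{r_m}(z) \ closure(B_{r_{m+1}}(z))} dμ(ζ) / ( ‖ζ − z‖^{2n} · |log ‖ζ − z‖| ) ≤ C. -/
open MeasureTheory Metric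
open scoped NNReal ENNReal

/-- Dyadic localization: any `t ∈ (a, a * 2^K]` lies in some dyadic annulus. -/
lemma exists_dyadic_annulus {a : ℝ} (t : ℝ) (K : ℕ) (hat : a < t) (h : t ≤ a * 2 ^ K) :
    ∃ k < K, a * 2 ^ k < t ∧ t ≤ a * 2 ^ (k + 1) := by
  induction K with
  | zero => simp only [pow_zero, mul_one] at h; linarith
  | succ K ih =>
    by_cases h' : t ≤ a * 2 ^ K
    · obtain ⟨k, hk, h1, h2⟩ := ih h'
      exact ⟨k, Nat.lt_succ_of_lt hk, h1, h2⟩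
    · exact ⟨K, Nat.lt_succ_self K, lt_of_not_ge h', h⟩

/-- Upgrade the Ahlfors bound from radii `≤ R` to radii `≤ 1` (with a worse constant),
via a finite covering of the unit ball by balls of radius `min R 1`. -/
lemma ahlfors_ball_bound (n N : ℕ) (C₀ R : ℝ) (hC₀ : 0 < C₀) (hR : 0 < R) :
    ∃ A : ℝ, 0 < A ∧ C₀ ≤ A ∧
      ∀ [MeasurableSpace (EuclideanSpace ℂ (Fin N))]
        [BorelSpace (EuclideanSpace ℂ (Fin N))]
        (μ : Measure (EuclideanSpace ℂ (Fin N))),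
        (∀ (w : EuclideanSpace ℂ (Fin N)) (ρ : ℝ), 0 < ρ → ρ ≤ R →
          μ (ball w ρ) ≤ ENNReal.ofReal (C₀ * ρ ^ (2 * n))) →
        ∀ (w : EuclideanSpace ℂ (Fin N)) (ρ : ℝ), 0 < ρ → ρ ≤ 1 →
          μ (ball w ρ) ≤ ENNReal.ofReal (A * ρ ^ (2 * n)) := by
  have hR' : 0 < min R 1 := lt_min hR one_pos
  obtain ⟨s, hs_fin, hs_cov⟩ := (totallyBounded_iff.mp
    (isCompact_closedBall (0 : EuclideanSpace ℂ (Fin N)) 1).totallyBounded) _ hR'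
  set M : ℕ := hs_fin.toFinset.card with hM
  refine ⟨(M + 1) * C₀, by positivity, ?_, ?_⟩
  · nlinarith [mul_nonneg (Nat.cast_nonneg M : (0:ℝ) ≤ (M:ℝ)) hC₀.le]
  · intro _ _ μ hμ w ρ hρ hρ1
    by_cases hcase : ρ ≤ R
    · refine (hμ w ρ hρ hcase).trans (ENNReal.ofReal_le_ofReal ?_)
      have h1 : (0:ℝ) ≤ ρ ^ (2 * n) := by positivity
      nlinarith [mul_nonneg (mul_nonneg (Nat.cast_nonneg M : (0:ℝ) ≤ (M:ℝ)) hC₀.le) h1]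
    · push_neg at hcase
      -- ρ > R, so min R 1 ≤ ρ
      have hsub : ball w ρ ⊆ ⋃ c ∈ hs_fin.toFinset, ball (w + c) (min R 1) := by
        intro ζ hζ
        have h1 : ζ - w ∈ closedBall (0 : EuclideanSpace ℂ (Fin N)) 1 := by
          rw [mem_closedBall, dist_zero_right]
          have := mem_ball.mp hζ
          rw [dist_eq_norm] at this
          linarith
        obtain ⟨c, hc, hc2⟩ := Set.mem_iUnion₂.mp (hs_cov h1)
        refine Set.mem_iUnion₂.mpr ⟨c, hs_fin.mem_toFinset.mpr hc, ?_⟩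
        rw [mem_ball, dist_eq_norm] at hc2 ⊢
        have : ζ - (w + c) = ζ - w - c := by abel
        rwa [this]
      calc μ (ball w ρ) ≤ ∑ c ∈ hs_fin.toFinset, μ (ball (w + c) (min R 1)) :=
            (measure_mono hsub).trans (measure_biUnion_finset_le _ _)
        _ ≤ ∑ _c ∈ hs_fin.toFinset, ENNReal.ofReal (C₀ * (min R 1) ^ (2 * n)) :=
            Finset.sum_le_sum fun c _ => hμ _ _ hR' (min_le_left _ _)
        _ = (M : ℝ≥0∞) * ENNReal.ofReal (C₀ * (min R 1) ^ (2 * n)) := by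
            rw [Finset.sum_const, hM, nsmul_eq_mul]
        _ ≤ ENNReal.ofReal ((M + 1) * C₀ * ρ ^ (2 * n)) := by
            rw [← ENNReal.ofReal_natCast M, ← ENNReal.ofReal_mul (by positivity)]
            refine ENNReal.ofReal_le_ofReal ?_
            have hmin : min R 1 ≤ ρ := le_trans (min_le_left _ _) hcase.le
            have hpow : (min R 1) ^ (2 * n) ≤ ρ ^ (2 * n) :=
              pow_le_pow_left₀ hR'.le hmin _
            have h0 : (0:ℝ) ≤ (M:ℝ) := Nat.cast_nonneg M
            nlinarith [mul_le_mul_of_nonneg_left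
                (mul_le_mul_of_nonneg_left hpow hC₀.le) h0,
              mul_nonneg hC₀.le (by positivity : (0:ℝ) ≤ ρ ^ (2 * n))]

set_option maxHeartbeats 1000000 in
/-- Uniform (in `m`) bound for the integral of `1/(‖ζ - z‖^{2n} |log ‖ζ - z‖|)` over the
annuli `B_{r_m}(z) \ closure (B_{r_{m+1}}(z))`, with `r_m = exp (−e^m)`, for a measure
with an upper Ahlfors regularity bound of exponent `2n`. -/
theorem integral_loglog_annulus_bound
    (n N : ℕ) (hn : 1 ≤ n) (hN : 1 ≤ N) (C₀ R : ℝ) (hC₀ : 0 < C₀) (hR : 0 < R) :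
    ∃ C : ℝ, 0 < C ∧
      ∀ [MeasurableSpace (EuclideanSpace ℂ (Fin N))]
        [BorelSpace (EuclideanSpace ℂ (Fin N))]
        (μ : Measure (EuclideanSpace ℂ (Fin N))),
        (∀ (w : EuclideanSpace ℂ (Fin N)) (ρ : ℝ), 0 < ρ → ρ ≤ R →
          μ (ball w ρ) ≤ ENNReal.ofReal (C₀ * ρ ^ (2 * n))) →
        ∀ (z : EuclideanSpace ℂ (Fin N)) (m : ℕ),
          (∫⁻ ζ in ball z (Real.exp (-Real.exp m)) \
                closedBall z (Real.exp (-Real.exp (m + 1))),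
              ENNReal.ofReal (1 / (‖ζ - z‖ ^ (2 * n) * |Real.log ‖ζ - z‖|)) ∂μ) ≤
            ENNReal.ofReal C := by
  obtain ⟨A, hA, hCA, hAbound⟩ := ahlfors_ball_bound n N C₀ R hC₀ hR
  refine ⟨5 * A * 4 ^ (2 * n), by positivity, ?_⟩
  intro _ _ μ hμ z m
  set r1 : ℝ := Real.exp (-Real.exp m) with hr1
  set r2 : ℝ := Real.exp (-Real.exp (m + 1)) with hr2
  have hr1pos : 0 < r1 := Real.exp_pos _
  have hr2pos : 0 < r2 := Real.exp_pos _
  have hem : (1:ℝ) ≤ Real.exp m := Real.one_le_exp (Nat.cast_nonneg m)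
  have he1 : (2.7182818283 : ℝ) < Real.exp 1 := Real.exp_one_gt_d9
  have he2 : Real.exp 1 < 2.7182818286 := Real.exp_one_lt_d9
  have hl2 : (0.6931471803 : ℝ) < Real.log 2 := Real.log_two_gt_d9
  -- r1 ≤ exp (-1) < 1/2
  have hr1half : r1 < 1/2 := by
    have h1 : r1 ≤ Real.exp (-1) := Real.exp_le_exp.mpr (by linarith)
    have h2 : Real.exp (-1) < 1/2 := by
      rw [Real.exp_neg]
      rw [inv_lt_comm₀ (Real.exp_pos 1) (by norm_num)]
      · linarith
    linarith
  set K : ℕ := ⌈4 * Real.exp m⌉₊ with hK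
  have hK1 : 4 * Real.exp (m:ℝ) ≤ (K:ℝ) := Nat.le_ceil _
  have hK2 : (K:ℝ) ≤ 5 * Real.exp m := by
    have := Nat.ceil_lt_add_one (by positivity : (0:ℝ) ≤ 4 * Real.exp m)
    rw [← hK] at this
    linarith
  -- r1 ≤ r2 * 2^K
  have hcover_rad : r1 ≤ r2 * 2 ^ K := by
    have h2K : (2:ℝ) ^ K = Real.exp ((K:ℝ) * Real.log 2) := by
      rw [Real.exp_nat_mul, Real.exp_log two_pos]
    rw [hr1, hr2, h2K, ← Real.exp_add, Real.exp_le_exp]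
    have hexp1 : Real.exp ((m:ℝ) + 1) = Real.exp m * Real.exp 1 := Real.exp_add _ _
    have hKl : 4 * Real.exp m * Real.log 2 ≤ (K:ℝ) * Real.log 2 :=
      mul_le_mul_of_nonneg_right hK1 (by linarith)
    push_cast
    nlinarith [Real.exp_pos (m:ℝ)]
  -- the dyadic annuli
  set D : Set (EuclideanSpace ℂ (Fin N)) := ball z r1 \ closedBall z r2 with hD
  have hDsub : D ⊆ ⋃ k : Fin K,
      ((closedBall z (r2 * 2 ^ ((k:ℕ) + 1)) \ closedBall z (r2 * 2 ^ (k:ℕ))) ∩ D) := by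
    intro ζ hζ
    have h1 : r2 < dist ζ z := by
      have := hζ.2
      rw [mem_closedBall] at this
      linarith [lt_of_not_ge this]
    have h2 : dist ζ z < r1 := mem_ball.mp hζ.1
    obtain ⟨k, hk, hk1, hk2⟩ := exists_dyadic_annulus (dist ζ z) K h1 (by linarith)
    refine Set.mem_iUnion.mpr ⟨⟨k, hk⟩, ⟨?_, ?_⟩, hζ⟩
    · exact mem_closedBall.mpr hk2
    · intro hmem
      exact absurd (mem_closedBall.mp hmem) (not_le.mpr hk1)
  -- per-annulus bound
  have hterm : ∀ k : Fin K,
      (∫⁻ ζ in (closedBall z (r2 * 2 ^ ((k:ℕ) + 1)) \ closedBall z (r2 * 2 ^ (k:ℕ))) ∩ D,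
          ENNReal.ofReal (1 / (‖ζ - z‖ ^ (2 * n) * |Real.log ‖ζ - z‖|)) ∂μ) ≤
        ENNReal.ofReal (A * 4 ^ (2 * n) / Real.exp m) := by
    intro k
    set ρk : ℝ := r2 * 2 ^ (k:ℕ) with hρk
    have hρkpos : 0 < ρk := by positivity
    set S : Set (EuclideanSpace ℂ (Fin N)) :=
      (closedBall z (r2 * 2 ^ ((k:ℕ) + 1)) \ closedBall z ρk) ∩ D with hS
    have hSmeas : MeasurableSet S :=
      ((measurableSet_closedBall.diff measurableSet_closedBall).inter
        (measurableSet_ball.diff measurableSet_closedBall))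
    -- pointwise bound on S
    have hpt : ∀ ζ ∈ S, ENNReal.ofReal (1 / (‖ζ - z‖ ^ (2 * n) * |Real.log ‖ζ - z‖|)) ≤
        ENNReal.ofReal (1 / (ρk ^ (2 * n) * Real.exp m)) := by
      intro ζ hζ
      have ht1 : ρk < ‖ζ - z‖ := by
        have := hζ.1.2
        rw [mem_closedBall, dist_eq_norm] at this
        exact lt_of_not_ge this
      have ht2 : ‖ζ - z‖ < r1 := by
        have := hζ.2.1
        rw [mem_ball, dist_eq_norm] at this
        exact this
      have hlog : Real.exp m < -Real.log ‖ζ - z‖ := by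
        have h1 : Real.log ‖ζ - z‖ < Real.log r1 :=
          Real.log_lt_log (lt_trans hρkpos ht1) ht2
        rw [hr1, Real.log_exp] at h1
        linarith
      have habs : Real.exp m ≤ |Real.log ‖ζ - z‖| := by
        rw [abs_of_neg (by linarith [Real.exp_pos (m:ℝ)] : Real.log ‖ζ - z‖ < 0)]
        linarith
      refine ENNReal.ofReal_le_ofReal ?_
      refine one_div_le_one_div_of_le
        (mul_pos (pow_pos hρkpos _) (Real.exp_pos _)) ?_
      have hpow : ρk ^ (2 * n) ≤ ‖ζ - z‖ ^ (2 * n) :=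
        pow_le_pow_left₀ hρkpos.le ht1.le _
      have h1 : (0:ℝ) ≤ ‖ζ - z‖ ^ (2 * n) := by positivity
      exact mul_le_mul hpow habs (Real.exp_pos _).le h1
    -- measure bound on S
    have hmeasS : μ S ≤ ENNReal.ofReal (A * (ρk * 4) ^ (2 * n)) := by
      set ρ' : ℝ := min (ρk * 4) r1 with hρ'
      have hρ'pos : 0 < ρ' := lt_min (by positivity) hr1pos
      have hSsub : S ⊆ ball z ρ' := by
        intro ζ hζ
        rw [mem_ball, lt_min_iff]
        constructor
        · have := hζ.1.1
          rw [mem_closedBall] at this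
          have h2 : r2 * 2 ^ ((k:ℕ) + 1) = ρk * 2 := by rw [hρk]; ring
          nlinarith
        · exact mem_ball.mp hζ.2.1
      calc μ S ≤ μ (ball z ρ') := measure_mono hSsub
        _ ≤ ENNReal.ofReal (A * ρ' ^ (2 * n)) :=
            hAbound μ hμ z ρ' hρ'pos (le_trans (min_le_right _ _) (by linarith))
        _ ≤ ENNReal.ofReal (A * (ρk * 4) ^ (2 * n)) := by
            refine ENNReal.ofReal_le_ofReal ?_
            have : ρ' ^ (2 * n) ≤ (ρk * 4) ^ (2 * n) :=
              pow_le_pow_left₀ hρ'pos.le (min_le_left _ _) _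
            nlinarith
    calc (∫⁻ ζ in S,
          ENNReal.ofReal (1 / (‖ζ - z‖ ^ (2 * n) * |Real.log ‖ζ - z‖|)) ∂μ)
        ≤ ∫⁻ _ζ in S, ENNReal.ofReal (1 / (ρk ^ (2 * n) * Real.exp m)) ∂μ :=
          setLIntegral_mono' hSmeas hpt
      _ = ENNReal.ofReal (1 / (ρk ^ (2 * n) * Real.exp m)) * μ S := setLIntegral_const _ _
      _ ≤ ENNReal.ofReal (1 / (ρk ^ (2 * n) * Real.exp m)) *
            ENNReal.ofReal (A * (ρk * 4) ^ (2 * n)) := by gcongr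
      _ = ENNReal.ofReal (A * 4 ^ (2 * n) / Real.exp m) := by
          rw [← ENNReal.ofReal_mul (by positivity)]
          congr 1
          have h1 : (ρk * 4) ^ (2 * n) = ρk ^ (2 * n) * 4 ^ (2 * n) := mul_pow _ _ _
          rw [h1]
          have h2 : (0:ℝ) < ρk ^ (2 * n) := by positivity
          have h3 : (0:ℝ) < Real.exp m := Real.exp_pos _
          field_simp
  -- put everything together
  calc (∫⁻ ζ in D,
        ENNReal.ofReal (1 / (‖ζ - z‖ ^ (2 * n) * |Real.log ‖ζ - z‖|)) ∂μ)
      ≤ ∫⁻ ζ in ⋃ k : Fin K,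
          ((closedBall z (r2 * 2 ^ ((k:ℕ) + 1)) \ closedBall z (r2 * 2 ^ (k:ℕ))) ∩ D),
          ENNReal.ofReal (1 / (‖ζ - z‖ ^ (2 * n) * |Real.log ‖ζ - z‖|)) ∂μ :=
        lintegral_mono_set hDsub
    _ ≤ ∑' k : Fin K, ∫⁻ ζ in
          ((closedBall z (r2 * 2 ^ ((k:ℕ) + 1)) \ closedBall z (r2 * 2 ^ (k:ℕ))) ∩ D),
          ENNReal.ofReal (1 / (‖ζ - z‖ ^ (2 * n) * |Real.log ‖ζ - z‖|)) ∂μ :=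
        lintegral_iUnion_le _ _
    _ ≤ ∑' _k : Fin K, ENNReal.ofReal (A * 4 ^ (2 * n) / Real.exp m) :=
        ENNReal.tsum_le_tsum hterm
    _ = (K : ℝ≥0∞) * ENNReal.ofReal (A * 4 ^ (2 * n) / Real.exp m) := by
        rw [tsum_fintype, Finset.sum_const, Finset.card_univ, Fintype.card_fin, nsmul_eq_mul]
    _ ≤ ENNReal.ofReal (5 * A * 4 ^ (2 * n)) := by
        rw [← ENNReal.ofReal_natCast K, ← ENNReal.ofReal_mul (Nat.cast_nonneg K)]
        refine ENNReal.ofReal_le_ofReal ?_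
        rw [div_eq_mul_inv]
        have h3 : (0:ℝ) < Real.exp m := Real.exp_pos _
        have h4 : (0:ℝ) < (4:ℝ) ^ (2 * n) := by positivity
        have h5 : (K:ℝ) * (Real.exp m)⁻¹ ≤ 5 := by
          rw [mul_inv_le_iff₀ h3]
          linarith
        calc (K:ℝ) * (A * 4 ^ (2 * n) * (Real.exp m)⁻¹)
            = ((K:ℝ) * (Real.exp m)⁻¹) * (A * 4 ^ (2 * n)) := by ring
          _ ≤ 5 * (A * 4 ^ (2 * n)) :=
            mul_le_mul_of_nonneg_right h5 (mul_nonneg hA.le h4.le)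
          _ = 5 * A * 4 ^ (2 * n) := by ring
end

section
/- Let n ≥ 1 and N ≥ 1 be integers, and let μ be a Borel measure on ℂ^N for which there are constants C₀ > 0 and R > 0 with μ(B_ρ(w)) ≤ C₀ ρ^{2n} for every w ∈ ℂ^N and every 0 < ρ ≤ R. Let D ⊆ ℂ^N be a bounded Borel set, K ⊆ ℂ^N a compact set, 0 ≤ α ≤ 2n and 0 ≤ β < 2n. For an integer m ≥ 0 set r_m := exp(−e^m). Then there exists a constant C₃ > 0, depending only on n, N, C₀, R, α, β, K and the diameter of D, but not on m, such that for every integer m ≥ 0 and every z ∈ K with z ≠ 0 one has: ∫_{D ∩ ( B_{r_m}(0) \ closure(B_{r_{m+1}}(0)) )} dμ(ζ) / ( ‖ζ‖^α · |log ‖ζ‖| · ‖ζ − z‖^β ) ≤ C₃ if α + β ≤ 2n, and ≤ C₃ · ‖z‖^{2n − α − β} if α + β > 2n. -/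
/-!
Split the annulus according to whether `ζ` is near the pole `z` (`‖ζ - z‖ < ‖ζ‖ / 2`) or not.
Near `z`, `‖ζ‖` is comparable to `‖z‖` and `|log ‖ζ‖| ≥ 1`, so it suffices to integrate
`‖ζ - z‖ ^ (-β)` over a ball around `z`: cutting it into the shells
`ρ e^{-k-1} ≤ ‖ζ - z‖ < ρ e^{-k}` and using `μ (B_ρ) ≤ C ρ^{2n}` gives a geometric series,
convergent because `β < 2n`. Away from `z` one has `‖ζ - z‖ ≥ ‖ζ‖ / 2`, or `‖ζ - z‖ ≥ ‖z‖ / 2`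
inside `B_{‖z‖/2}(0)`, which leaves integrals of `‖ζ‖ ^ (-t) / |log ‖ζ‖|` over the annulus
with `t ≤ 2n`. For `t = 2n` every shell around `0` contributes `O(1)`, but the annulus
`r_{m+1} < ‖ζ‖ < r_m` meets only about `e^{m+1}` of them, and this count is absorbed by
`|log ‖ζ‖| ≥ e^m`. Finally, the Ahlfors bound for radii `≤ R` extends to radii `≤ 1`, with a
constant independent of `μ`, by covering the unit ball with finitely many `R`-balls.
-/

open MeasureTheory Metric Filter Set Topology
open scoped NNReal ENNReal

theorem setLIntegral_le_mul_measure {α : Type*} [MeasurableSpace α] {μ : Measure α}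
    {s : Set α} (hs : MeasurableSet s) {f : α → ℝ≥0∞} {c : ℝ≥0∞} (hf : ∀ x ∈ s, f x ≤ c) :
    ∫⁻ x in s, f x ∂μ ≤ c * μ s :=
  (setLIntegral_mono' hs hf).trans_eq (setLIntegral_const s c)

theorem setLIntegral_ofReal_le_of_le_mul {α : Type*} [MeasurableSpace α] {μ : Measure α}
    {s t : Set α} {f g : α → ℝ} {c G : ℝ} (hs : MeasurableSet s) (hst : s ⊆ t) (hc : 0 ≤ c)
    (hfg : ∀ x ∈ s, f x ≤ c * g x)
    (hg : ∫⁻ x in t, ENNReal.ofReal (g x) ∂μ ≤ ENNReal.ofReal G) :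
    ∫⁻ x in s, ENNReal.ofReal (f x) ∂μ ≤ ENNReal.ofReal (c * G) :=
  calc ∫⁻ x in s, ENNReal.ofReal (f x) ∂μ
      ≤ ∫⁻ x in s, ENNReal.ofReal c * ENNReal.ofReal (g x) ∂μ :=
        setLIntegral_mono' hs fun x hx => by
          rw [← ENNReal.ofReal_mul hc]
          exact ENNReal.ofReal_le_ofReal (hfg x hx)
    _ ≤ ∫⁻ x in t, ENNReal.ofReal c * ENNReal.ofReal (g x) ∂μ := lintegral_mono_set hst
    _ ≤ ENNReal.ofReal (c * G) := by
        rw [lintegral_const_mul' _ _ ENNReal.ofReal_ne_top, ENNReal.ofReal_mul hc]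
        gcongr

theorem rpow_mul_exp_neg_div_rpow {ρ : ℝ} (hρ : 0 < ρ) (s t : ℝ) (k : ℕ) :
    (ρ * Real.exp (-k)) ^ s / (ρ * Real.exp (-(k + 1))) ^ t =
      Real.exp t * ρ ^ (s - t) * Real.exp (t - s) ^ k := by
  rw [Real.mul_rpow hρ.le (Real.exp_pos _).le, Real.mul_rpow hρ.le (Real.exp_pos _).le,
    ← Real.exp_mul, ← Real.exp_mul, Real.rpow_sub hρ, ← Real.exp_nat_mul]
  field_simp
  rw [← Real.exp_add, ← Real.exp_add]
  congr 1
  ring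

section

variable {E : Type*}

def UpperAhlforsRegular [PseudoMetricSpace E] [MeasurableSpace E] (μ : Measure E)
    (C s R : ℝ) : Prop :=
  ∀ (w : E) (ρ : ℝ), 0 < ρ → ρ ≤ R → μ (ball w ρ) ≤ ENNReal.ofReal (C * ρ ^ s)

theorem UpperAhlforsRegular.exists_const_change_radius [SeminormedAddCommGroup E]
    [ProperSpace E] {C s R : ℝ} (hC : 0 < C) (hs : 0 ≤ s) (hR : 0 < R) (R' : ℝ) :
    ∃ C' > 0, ∀ [MeasurableSpace E] (μ : Measure E),
      UpperAhlforsRegular μ C s R → UpperAhlforsRegular μ C' s R' := by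
  obtain ⟨T, -, hT, hcover⟩ := (isCompact_closedBall (0 : E) R').finite_cover_balls hR
  set M : ℝ := (hT.toFinset.card : ℝ)
  have hM : 0 ≤ M := by positivity
  refine ⟨C * (M + 1), by positivity, fun μ h w ρ hρ hρR' => ?_⟩
  rcases le_or_gt ρ R with hρR | hRρ
  · refine (h w ρ hρ hρR).trans (ENNReal.ofReal_le_ofReal ?_)
    gcongr
    exact le_mul_of_one_le_right hC.le (by linarith)
  have hsub : ball w ρ ⊆ ⋃ y ∈ hT.toFinset, ball (w + y) R := by
    intro ζ hζ
    have : ζ - w ∈ closedBall (0 : E) R' := by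
      rw [mem_closedBall, dist_zero_right, ← dist_eq_norm]
      exact (mem_ball.1 hζ).le.trans hρR'
    obtain ⟨y, hyT, hy⟩ := mem_iUnion₂.1 (hcover this)
    refine mem_iUnion₂.2 ⟨y, hT.mem_toFinset.2 hyT, ?_⟩
    rw [mem_ball_iff_norm, sub_sub] at hy
    exact mem_ball_iff_norm.2 hy
  calc μ (ball w ρ) ≤ ∑ y ∈ hT.toFinset, μ (ball (w + y) R) :=
        (measure_mono hsub).trans (measure_biUnion_finset_le _ _)
    _ ≤ ∑ _y ∈ hT.toFinset, ENNReal.ofReal (C * R ^ s) :=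
        Finset.sum_le_sum fun y _ => h _ R hR le_rfl
    _ = ENNReal.ofReal (M * (C * R ^ s)) := by
        rw [Finset.sum_const, nsmul_eq_mul, ← ENNReal.ofReal_natCast,
          ← ENNReal.ofReal_mul (by positivity)]
    _ ≤ ENNReal.ofReal (C * (M + 1) * ρ ^ s) := by
        gcongr ENNReal.ofReal ?_
        calc M * (C * R ^ s) ≤ (M + 1) * (C * ρ ^ s) := by gcongr; linarith
          _ = C * (M + 1) * ρ ^ s := by ring

theorem UpperAhlforsRegular.measure_singleton [PseudoMetricSpace E] [MeasurableSpace E]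
    {μ : Measure E} {C s R : ℝ} (h : UpperAhlforsRegular μ C s R) (hs : 0 < s) (hR : 0 < R)
    (w : E) : μ {w} = 0 := by
  have hlim : Tendsto (fun ρ : ℝ => ENNReal.ofReal (C * ρ ^ s)) (𝓝[>] 0) (𝓝 0) := by
    have := ((Real.continuousAt_rpow_const 0 s (Or.inr hs.le)).const_mul C).tendsto
    simpa [Real.zero_rpow hs.ne'] using
      (ENNReal.tendsto_ofReal this).mono_left nhdsWithin_le_nhds
  refine le_antisymm (ge_of_tendsto hlim ?_) bot_le
  filter_upwards [Ioc_mem_nhdsGT hR] with ρ hρ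
  exact (measure_mono (singleton_subset_iff.2 (mem_ball_self hρ.1))).trans (h w ρ hρ.1 hρ.2)

section Shells

variable [MetricSpace E]

def expShell (w : E) (ρ : ℝ) (k : ℕ) : Set E :=
  ball w (ρ * Real.exp (-k)) \ ball w (ρ * Real.exp (-(k + 1)))

theorem mem_expShell {w ζ : E} {ρ : ℝ} {k : ℕ} :
    ζ ∈ expShell w ρ k ↔
      ρ * Real.exp (-(k + 1)) ≤ dist ζ w ∧ dist ζ w < ρ * Real.exp (-k) := by
  simp [expShell, and_comm]

theorem ball_sdiff_singleton_subset_iUnion_expShell (w : E) (ρ : ℝ) :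
    ball w ρ \ {w} ⊆ ⋃ k : ℕ, expShell w ρ k := by
  rintro ζ ⟨hζρ, hζw⟩
  have hd : 0 < dist ζ w := dist_pos.2 hζw
  have hdρ : dist ζ w < ρ := mem_ball.1 hζρ
  have hρ : 0 < ρ := hd.trans hdρ
  set x := Real.log (ρ / dist ζ w)
  have hx : 0 < x := Real.log_pos ((one_lt_div hd).2 hdρ)
  have hdx : dist ζ w = ρ * Real.exp (-x) := by
    rw [Real.exp_neg, Real.exp_log (div_pos hρ hd)]
    field_simp
  have hk : ((⌈x⌉₊ - 1 : ℕ) : ℝ) + 1 = ⌈x⌉₊ := by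
    rw [Nat.cast_sub (Nat.one_le_iff_ne_zero.2 (Nat.ceil_pos.2 hx).ne'), Nat.cast_one,
      sub_add_cancel]
  refine mem_iUnion.2 ⟨⌈x⌉₊ - 1, mem_expShell.2 ⟨?_, ?_⟩⟩
  · rw [hdx, hk]
    gcongr
    exact Nat.le_ceil x
  · rw [hdx]
    refine mul_lt_mul_of_pos_left (Real.exp_lt_exp.2 (neg_lt_neg ?_)) hρ
    exact Nat.lt_ceil.1 (Nat.sub_lt (Nat.ceil_pos.2 hx) one_pos)

variable [MeasurableSpace E] {μ : Measure E}

theorem setLIntegral_le_tsum_expShell {S : Set E} {w : E} {ρ : ℝ} (hS : S ⊆ ball w ρ \ {w})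
    (f : E → ℝ≥0∞) :
    ∫⁻ ζ in S, f ζ ∂μ ≤ ∑' k : ℕ, ∫⁻ ζ in S ∩ expShell w ρ k, f ζ ∂μ := by
  refine (lintegral_mono_set ?_).trans (lintegral_iUnion_le _ _)
  rw [← inter_iUnion]
  exact subset_inter subset_rfl (hS.trans (ball_sdiff_singleton_subset_iUnion_expShell w ρ))

variable [OpensMeasurableSpace E]

theorem measurableSet_expShell (w : E) (ρ : ℝ) (k : ℕ) : MeasurableSet (expShell w ρ k) :=
  measurableSet_ball.diff measurableSet_ball

variable {C s R t ρ : ℝ}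

theorem UpperAhlforsRegular.setLIntegral_inter_expShell_le (h : UpperAhlforsRegular μ C s R)
    (ht : 0 ≤ t) (hρ : 0 < ρ) (hρR : ρ ≤ R) {S : Set E} (hS : MeasurableSet S) (w : E)
    (k : ℕ) :
    ∫⁻ ζ in S ∩ expShell w ρ k, ENNReal.ofReal (dist ζ w ^ t)⁻¹ ∂μ ≤
      ENNReal.ofReal (C * Real.exp t * ρ ^ (s - t) * Real.exp (t - s) ^ k) := by
  have hρk : 0 < ρ * Real.exp (-k) := by positivity
  have hρkR : ρ * Real.exp (-k) ≤ R :=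
    (mul_le_of_le_one_right hρ.le (Real.exp_le_one_iff.2 (by simp))).trans hρR
  calc ∫⁻ ζ in S ∩ expShell w ρ k, ENNReal.ofReal (dist ζ w ^ t)⁻¹ ∂μ
      ≤ ENNReal.ofReal ((ρ * Real.exp (-(k + 1))) ^ t)⁻¹ * μ (ball w (ρ * Real.exp (-k))) := by
        refine (setLIntegral_le_mul_measure (hS.inter (measurableSet_expShell w ρ k))
          fun ζ hζ => ?_).trans (by gcongr; exact inter_subset_right.trans sdiff_subset)
        gcongr
        exact (mem_expShell.1 hζ.2).1
    _ ≤ ENNReal.ofReal ((ρ * Real.exp (-(k + 1))) ^ t)⁻¹ *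
          ENNReal.ofReal (C * (ρ * Real.exp (-k)) ^ s) := by
        gcongr
        exact h w _ hρk hρkR
    _ = ENNReal.ofReal (C * Real.exp t * ρ ^ (s - t) * Real.exp (t - s) ^ k) := by
        rw [← ENNReal.ofReal_mul (by positivity), mul_assoc C, mul_assoc C,
          ← rpow_mul_exp_neg_div_rpow hρ]
        ring_nf

theorem UpperAhlforsRegular.setLIntegral_ball_inv_rpow_dist_le (h : UpperAhlforsRegular μ C s R)
    (hC : 0 ≤ C) (ht : 0 ≤ t) (hts : t < s) (w : E) (hρ : 0 < ρ) (hρR : ρ ≤ R) :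
    ∫⁻ ζ in ball w ρ, ENNReal.ofReal (dist ζ w ^ t)⁻¹ ∂μ ≤
      ENNReal.ofReal (C * Real.exp t / (1 - Real.exp (t - s)) * ρ ^ (s - t)) := by
  have hq : Real.exp (t - s) < 1 := Real.exp_lt_one_iff.2 (by linarith)
  have hw := h.measure_singleton (ht.trans_lt hts) (hρ.trans_le hρR) w
  rw [← setLIntegral_congr (sdiff_null_ae_eq_self hw)]
  calc ∫⁻ ζ in ball w ρ \ {w}, ENNReal.ofReal (dist ζ w ^ t)⁻¹ ∂μ
      ≤ ∑' k : ℕ, ENNReal.ofReal (C * Real.exp t * ρ ^ (s - t) * Real.exp (t - s) ^ k) :=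
        (setLIntegral_le_tsum_expShell subset_rfl _).trans (ENNReal.tsum_le_tsum fun k =>
          h.setLIntegral_inter_expShell_le ht hρ hρR
            (measurableSet_ball.diff (measurableSet_singleton w)) w k)
    _ = ENNReal.ofReal (C * Real.exp t / (1 - Real.exp (t - s)) * ρ ^ (s - t)) := by
        rw [← ENNReal.ofReal_tsum_of_nonneg (fun k => by positivity)
          ((summable_geometric_of_lt_one (by positivity) hq).mul_left _), tsum_mul_left,
          tsum_geometric_of_lt_one (by positivity) hq]
        ring_nf

theorem UpperAhlforsRegular.setLIntegral_ball_sdiff_closedBall_inv_rpow_dist_le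
    (h : UpperAhlforsRegular μ C s R) (hC : 0 ≤ C) (ht : 0 ≤ t) (hts : t ≤ s) (w : E) {r : ℝ}
    (hr : 0 < r) (hrρ : r ≤ ρ) (hρR : ρ ≤ R) :
    ∫⁻ ζ in ball w ρ \ closedBall w r, ENNReal.ofReal (dist ζ w ^ t)⁻¹ ∂μ ≤
      ENNReal.ofReal (C * Real.exp t * (Real.log (ρ / r) + 1) * ρ ^ (s - t)) := by
  have hρ : 0 < ρ := hr.trans_le hrρ
  set S := ball w ρ \ closedBall w r
  set K := ⌈Real.log (ρ / r)⌉₊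
  have hS : MeasurableSet S := measurableSet_ball.diff measurableSet_closedBall
  have hempty : ∀ k ∉ Finset.range K, S ∩ expShell w ρ k = ∅ := by
    refine fun k hk => eq_empty_iff_forall_notMem.2 fun ζ ⟨⟨_, hζr⟩, hζk⟩ => hk ?_
    have hrk : r < ρ * Real.exp (-k) :=
      (not_le.1 (mt mem_closedBall.2 hζr)).trans (mem_expShell.1 hζk).2
    rw [Finset.mem_range, Nat.lt_ceil, Real.lt_log_iff_exp_lt (div_pos hρ hr), lt_div_iff₀ hr]
    rwa [Real.exp_neg, ← div_eq_mul_inv, lt_div_iff₀ (Real.exp_pos _), mul_comm] at hrk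
  have hK : (K : ℝ) ≤ Real.log (ρ / r) + 1 :=
    (Nat.ceil_lt_add_one (Real.log_nonneg ((one_le_div hr).2 hrρ))).le
  calc ∫⁻ ζ in S, ENNReal.ofReal (dist ζ w ^ t)⁻¹ ∂μ
      ≤ ∑' k : ℕ, ∫⁻ ζ in S ∩ expShell w ρ k, ENNReal.ofReal (dist ζ w ^ t)⁻¹ ∂μ :=
        setLIntegral_le_tsum_expShell
          (sdiff_subset_sdiff_right (singleton_subset_iff.2 (mem_closedBall_self hr.le))) _
    _ = ∑ k ∈ Finset.range K, ∫⁻ ζ in S ∩ expShell w ρ k, ENNReal.ofReal (dist ζ w ^ t)⁻¹ ∂μ :=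
        tsum_eq_sum fun k hk => by rw [hempty k hk, setLIntegral_empty]
    _ ≤ ∑ _k ∈ Finset.range K, ENNReal.ofReal (C * Real.exp t * ρ ^ (s - t)) := by
        refine Finset.sum_le_sum fun k _ =>
          (h.setLIntegral_inter_expShell_le ht hρ hρR hS w k).trans ?_
        gcongr ENNReal.ofReal ?_
        exact mul_le_of_le_one_right (by positivity)
          (pow_le_one₀ (Real.exp_pos _).le (Real.exp_le_one_iff.2 (by linarith)))
    _ = ENNReal.ofReal (K * (C * Real.exp t * ρ ^ (s - t))) := by
        rw [Finset.sum_const, Finset.card_range, nsmul_eq_mul, ← ENNReal.ofReal_natCast,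
          ← ENNReal.ofReal_mul (by positivity)]
    _ ≤ ENNReal.ofReal (C * Real.exp t * (Real.log (ρ / r) + 1) * ρ ^ (s - t)) := by
        gcongr ENNReal.ofReal ?_
        calc (K : ℝ) * (C * Real.exp t * ρ ^ (s - t))
            ≤ (Real.log (ρ / r) + 1) * (C * Real.exp t * ρ ^ (s - t)) := by gcongr
          _ = C * Real.exp t * (Real.log (ρ / r) + 1) * ρ ^ (s - t) := by ring

end Shells

section LogAnnulus

variable [NormedAddCommGroup E]

variable (E) in
def logAnnulus (m : ℕ) : Set E :=
  ball 0 (Real.exp (-Real.exp m)) \ closedBall 0 (Real.exp (-Real.exp (m + 1)))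

theorem measurableSet_logAnnulus [MeasurableSpace E] [OpensMeasurableSpace E] (m : ℕ) :
    MeasurableSet (logAnnulus E m) :=
  measurableSet_ball.diff measurableSet_closedBall

theorem exp_neg_exp_lt_one (m : ℕ) : Real.exp (-Real.exp m) < 1 :=
  Real.exp_lt_one_iff.2 (neg_lt_zero.2 (Real.exp_pos _))

variable {m : ℕ} {ζ : E}

theorem norm_pos_of_mem_logAnnulus (hζ : ζ ∈ logAnnulus E m) : 0 < ‖ζ‖ :=
  (Real.exp_pos _).trans (by simpa using hζ.2)

theorem norm_lt_of_mem_logAnnulus (hζ : ζ ∈ logAnnulus E m) :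
    ‖ζ‖ < Real.exp (-Real.exp m) := by
  simpa using hζ.1

theorem exp_le_abs_log_norm_of_mem_logAnnulus (hζ : ζ ∈ logAnnulus E m) :
    Real.exp m ≤ |Real.log ‖ζ‖| := by
  have := Real.log_lt_log (norm_pos_of_mem_logAnnulus hζ) (norm_lt_of_mem_logAnnulus hζ)
  rw [Real.log_exp] at this
  exact (le_neg.2 this.le).trans (neg_le_abs _)

theorem one_le_abs_log_norm_of_mem_logAnnulus (hζ : ζ ∈ logAnnulus E m) :
    1 ≤ |Real.log ‖ζ‖| :=
  (Real.one_le_exp m.cast_nonneg).trans (exp_le_abs_log_norm_of_mem_logAnnulus hζ)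

variable [MeasurableSpace E] [OpensMeasurableSpace E] {μ : Measure E} {C s R t ρ : ℝ}

theorem UpperAhlforsRegular.setLIntegral_logAnnulus_inter_ball_le
    (h : UpperAhlforsRegular μ C s R) (hC : 0 ≤ C) (ht : 0 ≤ t) (hts : t ≤ s) (m : ℕ)
    (hρm : ρ ≤ Real.exp (-Real.exp m)) (hρR : ρ ≤ R) :
    ∫⁻ ζ in logAnnulus E m ∩ ball 0 ρ, ENNReal.ofReal (‖ζ‖ ^ t * |Real.log ‖ζ‖|)⁻¹ ∂μ ≤
      ENNReal.ofReal (C * Real.exp (s + 1) * ρ ^ (s - t)) := by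
  set r := Real.exp (-Real.exp (m + 1))
  rcases le_or_gt ρ r with hρr | hrρ
  · have : logAnnulus E m ∩ ball 0 ρ = ∅ := eq_empty_iff_forall_notMem.2 fun ζ ⟨hζ, hζρ⟩ =>
      hζ.2 (mem_closedBall.2 ((mem_ball.1 hζρ).le.trans hρr))
    simp [this]
  have hρ : 0 < ρ := (Real.exp_pos _).trans hrρ
  have hpt : ∀ ζ ∈ logAnnulus E m ∩ ball 0 ρ,
      (‖ζ‖ ^ t * |Real.log ‖ζ‖|)⁻¹ ≤ Real.exp (-m) * (dist ζ 0 ^ t)⁻¹ := fun ζ ⟨hζ, _⟩ => by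
    rw [dist_zero_right, mul_inv, mul_comm, Real.exp_neg]
    gcongr
    exact exp_le_abs_log_norm_of_mem_logAnnulus hζ
  -- about `log (ρ / r) ≤ e^{m+1} - e^m` shells meet the domain, each weighted by `e^{-m}`
  have hcount : Real.exp (-m) * (Real.log (ρ / r) + 1) ≤ Real.exp 1 := by
    have hρm' : Real.log ρ ≤ -Real.exp m := by simpa using Real.log_le_log hρ hρm
    have h1 : Real.exp (-m) * Real.exp (m + 1) = Real.exp 1 := by
      rw [← Real.exp_add]
      ring_nf
    have h2 : Real.exp (-m) * Real.exp m = 1 := by simp [← Real.exp_add]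
    have h3 : Real.exp (-m) ≤ 1 := Real.exp_le_one_iff.2 (by simp)
    rw [Real.log_div hρ.ne' (Real.exp_pos _).ne', Real.log_exp]
    nlinarith [Real.exp_pos (-m)]
  have hL : 0 ≤ Real.log (ρ / r) := Real.log_nonneg ((one_le_div (Real.exp_pos _)).2 hrρ.le)
  refine (setLIntegral_ofReal_le_of_le_mul ((measurableSet_logAnnulus m).inter measurableSet_ball)
    (fun ζ ⟨hζ, hζρ⟩ => ⟨hζρ, hζ.2⟩) (Real.exp_pos (-m)).le hpt
    (h.setLIntegral_ball_sdiff_closedBall_inv_rpow_dist_le hC ht hts 0 (Real.exp_pos _)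
      hrρ.le hρR)).trans (ENNReal.ofReal_le_ofReal ?_)
  calc Real.exp (-m) * (C * Real.exp t * (Real.log (ρ / r) + 1) * ρ ^ (s - t))
      = C * ρ ^ (s - t) * Real.exp t * (Real.exp (-m) * (Real.log (ρ / r) + 1)) := by ring
    _ ≤ C * ρ ^ (s - t) * Real.exp s * Real.exp 1 := by gcongr
    _ = C * Real.exp (s + 1) * ρ ^ (s - t) := by rw [Real.exp_add]; ring

end LogAnnulus

section TwoPole

variable [NormedAddCommGroup E] {α β : ℝ} {m : ℕ} {z ζ : E}

noncomputable def twoPoleLogKernel (α β : ℝ) (z ζ : E) : ℝ :=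
  1 / (‖ζ‖ ^ α * |Real.log ‖ζ‖| * ‖ζ - z‖ ^ β)

theorem twoPoleLogKernel_le_of_near (hα : 0 ≤ α) (hz : 0 < ‖z‖) (hζ : ζ ∈ logAnnulus E m)
    (hζz : ‖ζ - z‖ < ‖ζ‖ / 2) :
    twoPoleLogKernel α β z ζ ≤ ((2 / 3 * ‖z‖) ^ α)⁻¹ * (dist ζ z ^ β)⁻¹ := by
  have hζ' : 2 / 3 * ‖z‖ ≤ ‖ζ‖ := by linarith [norm_le_norm_add_norm_sub ζ z]
  rw [twoPoleLogKernel, one_div, mul_inv, dist_eq_norm]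
  gcongr
  calc (2 / 3 * ‖z‖) ^ α ≤ ‖ζ‖ ^ α := by gcongr
    _ ≤ ‖ζ‖ ^ α * |Real.log ‖ζ‖| :=
      le_mul_of_one_le_right (by positivity) (one_le_abs_log_norm_of_mem_logAnnulus hζ)

theorem twoPoleLogKernel_le_of_far (hβ : 0 ≤ β) (hζ : ζ ∈ logAnnulus E m)
    (hζz : ‖ζ‖ / 2 ≤ ‖ζ - z‖) :
    twoPoleLogKernel α β z ζ ≤ 2 ^ β * (‖ζ‖ ^ (α + β) * |Real.log ‖ζ‖|)⁻¹ := by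
  have h0 := norm_pos_of_mem_logAnnulus hζ
  have hL := one_le_abs_log_norm_of_mem_logAnnulus hζ
  calc twoPoleLogKernel α β z ζ ≤ 1 / (‖ζ‖ ^ α * |Real.log ‖ζ‖| * (‖ζ‖ / 2) ^ β) := by
        rw [twoPoleLogKernel]
        gcongr
    _ = 2 ^ β * (‖ζ‖ ^ (α + β) * |Real.log ‖ζ‖|)⁻¹ := by
        rw [Real.div_rpow h0.le zero_le_two, Real.rpow_add h0]
        field_simp

theorem twoPoleLogKernel_le_of_far_from_pole (hz : 0 < ‖z‖) (hβ : 0 ≤ β)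
    (hζz : ‖z‖ / 2 ≤ ‖ζ - z‖) :
    twoPoleLogKernel α β z ζ ≤ ((‖z‖ / 2) ^ β)⁻¹ * (‖ζ‖ ^ α * |Real.log ‖ζ‖|)⁻¹ := by
  rw [twoPoleLogKernel, one_div, mul_inv, mul_comm]
  gcongr

variable [MeasurableSpace E] [OpensMeasurableSpace E] {μ : Measure E} {C s : ℝ}

theorem measurableSet_setOf_norm_sub_lt_half_norm (z : E) :
    MeasurableSet {ζ : E | ‖ζ - z‖ < ‖ζ‖ / 2} :=
  (isOpen_lt (by fun_prop) (by fun_prop)).measurableSet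

theorem UpperAhlforsRegular.setLIntegral_twoPoleLogKernel_near_le
    (h : UpperAhlforsRegular μ C s 1) (hC : 0 ≤ C) (hα : 0 ≤ α) (hβ : 0 ≤ β) (hβs : β < s)
    (m : ℕ) (hz : 0 < ‖z‖) :
    ∫⁻ ζ in logAnnulus E m ∩ {ζ | ‖ζ - z‖ < ‖ζ‖ / 2},
        ENNReal.ofReal (twoPoleLogKernel α β z ζ) ∂μ ≤
      ENNReal.ofReal
        ((3 / 2) ^ α * (C * Real.exp β / (1 - Real.exp (β - s))) * ‖z‖ ^ (s - α - β)) := by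
  have hCA : 0 ≤ C * Real.exp β / (1 - Real.exp (β - s)) :=
    div_nonneg (by positivity) (sub_nonneg.2 (Real.exp_le_one_iff.2 (by linarith)))
  have hsub : logAnnulus E m ∩ {ζ | ‖ζ - z‖ < ‖ζ‖ / 2} ⊆ ball z (min ‖z‖ 1) := by
    rintro ζ ⟨hζ, hζz : ‖ζ - z‖ < ‖ζ‖ / 2⟩
    have := norm_le_norm_add_norm_sub' ζ z
    have := (norm_lt_of_mem_logAnnulus hζ).trans (exp_neg_exp_lt_one m)
    rw [mem_ball_iff_norm, lt_min_iff]
    constructor <;> linarith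
  refine (setLIntegral_ofReal_le_of_le_mul ((measurableSet_logAnnulus m).inter
    (measurableSet_setOf_norm_sub_lt_half_norm z)) hsub (by positivity)
    (fun ζ ⟨hζ, hζz⟩ => twoPoleLogKernel_le_of_near hα hz hζ hζz)
    (h.setLIntegral_ball_inv_rpow_dist_le hC hβ hβs z (lt_min hz one_pos)
      (min_le_right _ _))).trans (ENNReal.ofReal_le_ofReal ?_)
  calc ((2 / 3 * ‖z‖) ^ α)⁻¹ *
        (C * Real.exp β / (1 - Real.exp (β - s)) * min ‖z‖ 1 ^ (s - β))
      ≤ ((2 / 3 * ‖z‖) ^ α)⁻¹ * (C * Real.exp β / (1 - Real.exp (β - s)) * ‖z‖ ^ (s - β)) := by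
        gcongr
        exact min_le_left _ _
    _ = (3 / 2) ^ α * (C * Real.exp β / (1 - Real.exp (β - s))) * ‖z‖ ^ (s - α - β) := by
        rw [Real.mul_rpow (by norm_num) hz.le, show s - α - β = s - β - α by ring,
          Real.rpow_sub hz (s - β) α, show (3 / 2 : ℝ) = (2 / 3)⁻¹ by norm_num,
          Real.inv_rpow (by norm_num)]
        field_simp

theorem UpperAhlforsRegular.setLIntegral_twoPoleLogKernel_far_le
    (h : UpperAhlforsRegular μ C s 1) (hC : 0 ≤ C) (hα : 0 ≤ α) (hβ : 0 ≤ β)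
    (hαβ : α + β ≤ s) (m : ℕ) (z : E) :
    ∫⁻ ζ in logAnnulus E m \ {ζ | ‖ζ - z‖ < ‖ζ‖ / 2},
        ENNReal.ofReal (twoPoleLogKernel α β z ζ) ∂μ ≤
      ENNReal.ofReal (2 ^ β * (C * Real.exp (s + 1))) := by
  have hrm := exp_neg_exp_lt_one m
  refine (setLIntegral_ofReal_le_of_le_mul (t := logAnnulus E m ∩ ball 0 (Real.exp (-Real.exp m)))
    ((measurableSet_logAnnulus m).diff (measurableSet_setOf_norm_sub_lt_half_norm z))
    (fun ζ hζ => ⟨hζ.1, mem_ball_zero_iff.2 (norm_lt_of_mem_logAnnulus hζ.1)⟩) (by positivity)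
    (fun ζ ⟨hζ, hζz⟩ => twoPoleLogKernel_le_of_far hβ hζ (not_lt.1 hζz))
    (h.setLIntegral_logAnnulus_inter_ball_le hC (by positivity) hαβ m le_rfl hrm.le)).trans
    (ENNReal.ofReal_le_ofReal ?_)
  exact mul_le_mul_of_nonneg_left (mul_le_of_le_one_right (by positivity)
    (Real.rpow_le_one (Real.exp_pos _).le hrm.le (by linarith))) (by positivity)

theorem UpperAhlforsRegular.setLIntegral_twoPoleLogKernel_inter_ball_le
    (h : UpperAhlforsRegular μ C s 1) (hC : 0 ≤ C) (hα : 0 ≤ α) (hαs : α ≤ s) (hβ : 0 ≤ β)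
    (m : ℕ) (hz : 0 < ‖z‖) :
    ∫⁻ ζ in logAnnulus E m ∩ ball 0 (‖z‖ / 2), ENNReal.ofReal (twoPoleLogKernel α β z ζ) ∂μ ≤
      ENNReal.ofReal (C * Real.exp (s + 1) * (‖z‖ / 2) ^ (s - α - β)) := by
  have hrm := exp_neg_exp_lt_one m
  set ρ := min (‖z‖ / 2) (Real.exp (-Real.exp m))
  have hpt : ∀ ζ ∈ logAnnulus E m ∩ ball 0 (‖z‖ / 2), twoPoleLogKernel α β z ζ ≤
      ((‖z‖ / 2) ^ β)⁻¹ * (‖ζ‖ ^ α * |Real.log ‖ζ‖|)⁻¹ := fun ζ ⟨_, hζz⟩ => by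
    have := mem_ball_zero_iff.1 hζz
    exact twoPoleLogKernel_le_of_far_from_pole hz hβ
      (by linarith [norm_le_norm_add_norm_sub ζ z])
  refine (setLIntegral_ofReal_le_of_le_mul ((measurableSet_logAnnulus m).inter measurableSet_ball)
    (fun ζ ⟨hζ, hζz⟩ => ⟨hζ, mem_ball_zero_iff.2 (lt_min (mem_ball_zero_iff.1 hζz)
      (norm_lt_of_mem_logAnnulus hζ))⟩) (by positivity) hpt
    (h.setLIntegral_logAnnulus_inter_ball_le hC hα hαs m (min_le_right _ _)
      ((min_le_right _ _).trans hrm.le))).trans (ENNReal.ofReal_le_ofReal ?_)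
  calc ((‖z‖ / 2) ^ β)⁻¹ * (C * Real.exp (s + 1) * ρ ^ (s - α))
      ≤ ((‖z‖ / 2) ^ β)⁻¹ * (C * Real.exp (s + 1) * (‖z‖ / 2) ^ (s - α)) := by
        gcongr
        exact min_le_left _ _
    _ = C * Real.exp (s + 1) * (‖z‖ / 2) ^ (s - α - β) := by
        rw [Real.rpow_sub (half_pos hz) (s - α) β]
        ring

theorem UpperAhlforsRegular.setLIntegral_twoPoleLogKernel_far_sdiff_ball_le
    (h : UpperAhlforsRegular μ C s 1) (hC : 0 ≤ C) (hs : 0 ≤ s) (hβ : 0 ≤ β)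
    (hsαβ : s ≤ α + β) (m : ℕ) (hz : 0 < ‖z‖) :
    ∫⁻ ζ in (logAnnulus E m \ {ζ | ‖ζ - z‖ < ‖ζ‖ / 2}) \ ball 0 (‖z‖ / 2),
        ENNReal.ofReal (twoPoleLogKernel α β z ζ) ∂μ ≤
      ENNReal.ofReal (2 ^ β * (‖z‖ / 2) ^ (s - α - β) * (C * Real.exp (s + 1))) := by
  have hrm := exp_neg_exp_lt_one m
  have hpt : ∀ ζ ∈ (logAnnulus E m \ {ζ | ‖ζ - z‖ < ‖ζ‖ / 2}) \ ball 0 (‖z‖ / 2),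
      twoPoleLogKernel α β z ζ ≤
        2 ^ β * (‖z‖ / 2) ^ (s - α - β) * (‖ζ‖ ^ s * |Real.log ‖ζ‖|)⁻¹ := by
    rintro ζ ⟨⟨hζ, hζz⟩, hζ0⟩
    have h0 := norm_pos_of_mem_logAnnulus hζ
    have hζ0 : ‖z‖ / 2 ≤ ‖ζ‖ := by simpa using hζ0
    have hL : 0 < |Real.log ‖ζ‖| :=
      zero_lt_one.trans_le (one_le_abs_log_norm_of_mem_logAnnulus hζ)
    have hsplit : ‖ζ‖ ^ (α + β) = ‖ζ‖ ^ s * ‖ζ‖ ^ (α + β - s) := by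
      rw [← Real.rpow_add h0]
      ring_nf
    refine (twoPoleLogKernel_le_of_far hβ hζ (not_lt.1 hζz)).trans ?_
    rw [mul_assoc, show s - α - β = -(α + β - s) by ring, Real.rpow_neg (half_pos hz).le,
      ← mul_inv]
    refine mul_le_mul_of_nonneg_left (inv_anti₀ (by positivity) ?_) (by positivity)
    calc (‖z‖ / 2) ^ (α + β - s) * (‖ζ‖ ^ s * |Real.log ‖ζ‖|)
        ≤ ‖ζ‖ ^ (α + β - s) * (‖ζ‖ ^ s * |Real.log ‖ζ‖|) := by gcongr
      _ = ‖ζ‖ ^ (α + β) * |Real.log ‖ζ‖| := by rw [hsplit]; ring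
  refine (setLIntegral_ofReal_le_of_le_mul (t := logAnnulus E m ∩ ball 0 (Real.exp (-Real.exp m)))
    (((measurableSet_logAnnulus m).diff (measurableSet_setOf_norm_sub_lt_half_norm z)).diff
      measurableSet_ball)
    (fun ζ hζ => ⟨hζ.1.1, mem_ball_zero_iff.2 (norm_lt_of_mem_logAnnulus hζ.1.1)⟩)
    (by positivity) hpt
    (h.setLIntegral_logAnnulus_inter_ball_le hC hs le_rfl m le_rfl hrm.le)).trans_eq ?_
  rw [sub_self, Real.rpow_zero, mul_one]

theorem UpperAhlforsRegular.setLIntegral_twoPoleLogKernel_le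
    (h : UpperAhlforsRegular μ C s 1) (hC : 0 ≤ C) (hα : 0 ≤ α) (hβ : 0 ≤ β) (hβs : β < s)
    (hαβ : α + β ≤ s) (m : ℕ) (hz : 0 < ‖z‖) :
    ∫⁻ ζ in logAnnulus E m, ENNReal.ofReal (twoPoleLogKernel α β z ζ) ∂μ ≤
      ENNReal.ofReal ((3 / 2) ^ α * (C * Real.exp β / (1 - Real.exp (β - s))) *
        ‖z‖ ^ (s - α - β) + 2 ^ β * (C * Real.exp (s + 1))) := by
  have hCA : 0 ≤ C * Real.exp β / (1 - Real.exp (β - s)) :=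
    div_nonneg (by positivity) (sub_nonneg.2 (Real.exp_le_one_iff.2 (by linarith)))
  rw [← lintegral_inter_add_sdiff _ _ (measurableSet_setOf_norm_sub_lt_half_norm z),
    ENNReal.ofReal_add (by positivity) (by positivity)]
  exact add_le_add (h.setLIntegral_twoPoleLogKernel_near_le hC hα hβ hβs m hz)
    (h.setLIntegral_twoPoleLogKernel_far_le hC hα hβ hαβ m z)

theorem UpperAhlforsRegular.setLIntegral_twoPoleLogKernel_le_of_lt
    (h : UpperAhlforsRegular μ C s 1) (hC : 0 ≤ C) (hα : 0 ≤ α) (hαs : α ≤ s) (hβ : 0 ≤ β)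
    (hβs : β < s) (hαβ : s < α + β) (m : ℕ) (hz : 0 < ‖z‖) :
    ∫⁻ ζ in logAnnulus E m, ENNReal.ofReal (twoPoleLogKernel α β z ζ) ∂μ ≤
      ENNReal.ofReal (((3 / 2) ^ α * (C * Real.exp β / (1 - Real.exp (β - s))) +
        (1 + 2 ^ β) * (C * Real.exp (s + 1)) / 2 ^ (s - α - β)) * ‖z‖ ^ (s - α - β)) := by
  have hCA : 0 ≤ C * Real.exp β / (1 - Real.exp (β - s)) :=
    div_nonneg (by positivity) (sub_nonneg.2 (Real.exp_le_one_iff.2 (by linarith)))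
  rw [← lintegral_inter_add_sdiff _ _ (measurableSet_setOf_norm_sub_lt_half_norm z),
    ← lintegral_inter_add_sdiff _ (logAnnulus E m \ _) (measurableSet_ball (x := 0) (ε := ‖z‖ / 2))]
  calc _ ≤ ENNReal.ofReal ((3 / 2) ^ α * (C * Real.exp β / (1 - Real.exp (β - s))) *
          ‖z‖ ^ (s - α - β)) +
        (ENNReal.ofReal (C * Real.exp (s + 1) * (‖z‖ / 2) ^ (s - α - β)) +
          ENNReal.ofReal (2 ^ β * (‖z‖ / 2) ^ (s - α - β) * (C * Real.exp (s + 1)))) :=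
      add_le_add (h.setLIntegral_twoPoleLogKernel_near_le hC hα hβ hβs m hz) (add_le_add
        ((lintegral_mono_set (inter_subset_inter_left _ sdiff_subset)).trans
          (h.setLIntegral_twoPoleLogKernel_inter_ball_le hC hα hαs hβ m hz))
        (h.setLIntegral_twoPoleLogKernel_far_sdiff_ball_le hC (hβ.trans hβs.le) hβ hαβ.le m hz))
    _ = _ := by
      rw [← ENNReal.ofReal_add (by positivity) (by positivity),
        ← ENNReal.ofReal_add (by positivity) (by positivity), Real.div_rpow hz.le zero_le_two]
      congr 1
      field_simp

end TwoPole

end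

theorem two_pole_log_annulus_estimate_general
    (n N : ℕ) (C₀ R : ℝ) (hC₀ : 0 < C₀) (hR : 0 < R)
    (α β : ℝ) (hα : 0 ≤ α) (hα' : α ≤ 2 * n) (hβ : 0 ≤ β) (hβ' : β < 2 * n)
    (d₀ : ℝ) (K : Set (EuclideanSpace ℂ (Fin N))) (hK : IsCompact K) :
    ∃ C₃ : ℝ, 0 < C₃ ∧
      ∀ [MeasurableSpace (EuclideanSpace ℂ (Fin N))]
        [BorelSpace (EuclideanSpace ℂ (Fin N))]
        (μ : Measure (EuclideanSpace ℂ (Fin N))),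
        (∀ (w : EuclideanSpace ℂ (Fin N)) (ρ : ℝ), 0 < ρ → ρ ≤ R →
          μ (ball w ρ) ≤ ENNReal.ofReal (C₀ * ρ ^ (2 * n))) →
        ∀ D : Set (EuclideanSpace ℂ (Fin N)), MeasurableSet D → Bornology.IsBounded D →
          Metric.diam D ≤ d₀ →
          ∀ (m : ℕ), ∀ z ∈ K, z ≠ 0 →
            (α + β ≤ 2 * n →
              (∫⁻ ζ in D ∩ (ball (0 : EuclideanSpace ℂ (Fin N)) (Real.exp (-Real.exp m)) \
                    closedBall (0 : EuclideanSpace ℂ (Fin N)) (Real.exp (-Real.exp (m + 1)))),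
                  ENNReal.ofReal
                    (1 / (‖ζ‖ ^ α * |Real.log ‖ζ‖| * ‖ζ - z‖ ^ β)) ∂μ) ≤
                ENNReal.ofReal C₃) ∧
            (2 * n < α + β →
              (∫⁻ ζ in D ∩ (ball (0 : EuclideanSpace ℂ (Fin N)) (Real.exp (-Real.exp m)) \
                    closedBall (0 : EuclideanSpace ℂ (Fin N)) (Real.exp (-Real.exp (m + 1)))),
                  ENNReal.ofReal
                    (1 / (‖ζ‖ ^ α * |Real.log ‖ζ‖| * ‖ζ - z‖ ^ β)) ∂μ) ≤
                ENNReal.ofReal (C₃ * ‖z‖ ^ (2 * n - α - β))) := by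
  obtain ⟨C₁, hC₁, hC₁μ⟩ := UpperAhlforsRegular.exists_const_change_radius
    (E := EuclideanSpace ℂ (Fin N)) hC₀ (by positivity : (0 : ℝ) ≤ 2 * n) hR 1
  have hreg : ∀ [MeasurableSpace (EuclideanSpace ℂ (Fin N))] (μ : Measure _),
      (∀ (w : EuclideanSpace ℂ (Fin N)) (ρ : ℝ), 0 < ρ → ρ ≤ R →
        μ (ball w ρ) ≤ ENNReal.ofReal (C₀ * ρ ^ (2 * n))) →
      UpperAhlforsRegular μ C₁ (2 * n) 1 := fun μ hμ => hC₁μ μ fun w ρ hρ hρR => by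
    rw [show (2 * n : ℝ) = (2 * n : ℕ) by push_cast; rfl, Real.rpow_natCast]
    exact hμ w ρ hρ hρR
  have hCA : 0 < C₁ * Real.exp β / (1 - Real.exp (β - 2 * n)) :=
    div_pos (by positivity) (sub_pos.2 (Real.exp_lt_one_iff.2 (by linarith)))
  obtain ⟨B, hB⟩ := hK.isBounded.subset_closedBall 0
  rcases le_or_gt (α + β) (2 * n) with hαβ | hαβ
  · refine ⟨(3 / 2) ^ α * (C₁ * Real.exp β / (1 - Real.exp (β - 2 * n))) *
      max B 1 ^ (2 * n - α - β) + 2 ^ β * (C₁ * Real.exp (2 * n + 1)), by positivity,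
      fun μ hμ D _ _ _ m z hz hz0 => ⟨fun _ => ?_, fun h => absurd hαβ h.not_ge⟩⟩
    refine (lintegral_mono_set inter_subset_right).trans ((hreg μ hμ
      |>.setLIntegral_twoPoleLogKernel_le hC₁.le hα hβ hβ' hαβ m
        (norm_pos_iff.2 hz0)).trans ?_)
    gcongr
    · linarith
    · exact (mem_closedBall_zero_iff.1 (hB hz)).trans (le_max_left B 1)
  · refine ⟨(3 / 2) ^ α * (C₁ * Real.exp β / (1 - Real.exp (β - 2 * n))) +
      (1 + 2 ^ β) * (C₁ * Real.exp (2 * n + 1)) / 2 ^ (2 * n - α - β), by positivity,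
      fun μ hμ D _ _ _ m z _ hz0 => ⟨fun h => absurd h hαβ.not_ge, fun _ => ?_⟩⟩
    exact (lintegral_mono_set inter_subset_right).trans (hreg μ hμ
      |>.setLIntegral_twoPoleLogKernel_le_of_lt hC₁.le hα hα' hβ hβ' hαβ m
        (norm_pos_iff.2 hz0))

/-- The refined two-pole estimate with logarithmic weight over the annuli
`B_{r_m}(0) \ closure (B_{r_{m+1}}(0))`, `r_m = exp (−e^m)`, uniform in `m`,
for a measure with an upper Ahlfors regularity bound of exponent `2n`. -/
theorem two_pole_log_annulus_estimate
    (n N : ℕ) (hn : 1 ≤ n) (hN : 1 ≤ N) (C₀ R : ℝ) (hC₀ : 0 < C₀) (hR : 0 < R)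
    (α β : ℝ) (hα : 0 ≤ α) (hα' : α ≤ 2 * n) (hβ : 0 ≤ β) (hβ' : β < 2 * n)
    (d₀ : ℝ) (hd₀ : 0 < d₀) (K : Set (EuclideanSpace ℂ (Fin N))) (hK : IsCompact K) :
    ∃ C₃ : ℝ, 0 < C₃ ∧
      ∀ [MeasurableSpace (EuclideanSpace ℂ (Fin N))]
        [BorelSpace (EuclideanSpace ℂ (Fin N))]
        (μ : Measure (EuclideanSpace ℂ (Fin N))),
        (∀ (w : EuclideanSpace ℂ (Fin N)) (ρ : ℝ), 0 < ρ → ρ ≤ R →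
          μ (ball w ρ) ≤ ENNReal.ofReal (C₀ * ρ ^ (2 * n))) →
        ∀ D : Set (EuclideanSpace ℂ (Fin N)), MeasurableSet D → Bornology.IsBounded D →
          Metric.diam D ≤ d₀ →
          ∀ (m : ℕ), ∀ z ∈ K, z ≠ 0 →
            (α + β ≤ 2 * n →
              (∫⁻ ζ in D ∩ (ball (0 : EuclideanSpace ℂ (Fin N)) (Real.exp (-Real.exp m)) \
                    closedBall (0 : EuclideanSpace ℂ (Fin N)) (Real.exp (-Real.exp (m + 1)))),
                  ENNReal.ofReal
                    (1 / (‖ζ‖ ^ α * |Real.log ‖ζ‖| * ‖ζ - z‖ ^ β)) ∂μ) ≤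
                ENNReal.ofReal C₃) ∧
            (2 * n < α + β →
              (∫⁻ ζ in D ∩ (ball (0 : EuclideanSpace ℂ (Fin N)) (Real.exp (-Real.exp m)) \
                    closedBall (0 : EuclideanSpace ℂ (Fin N)) (Real.exp (-Real.exp (m + 1)))),
                  ENNReal.ofReal
                    (1 / (‖ζ‖ ^ α * |Real.log ‖ζ‖| * ‖ζ - z‖ ^ β)) ∂μ) ≤
                ENNReal.ofReal (C₃ * ‖z‖ ^ (2 * n - α - β))) :=
  two_pole_log_annulus_estimate_general n N C₀ R hC₀ hR α β hα hα' hβ hβ' d₀ K hK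
end

section
/- Let n ≥ 1 and N ≥ 1 be integers, and let μ be a finite Borel measure on ℂ^N with bounded support for which there are constants C₀ > 0 and R > 0 with μ(B_ρ(w)) ≤ C₀ ρ^{2n} for every w ∈ ℂ^N and every 0 < ρ ≤ R. Fix 0 ≤ γ < 2n and define the kernel k_γ(ζ, z) := ‖z‖^γ / ( ‖ζ‖^γ · ‖ζ − z‖^{2n−1} ) for ζ ≠ 0, ζ ≠ z. Let p satisfy 2n/(2n − γ) < p ≤ ∞. Then there exists a constant C > 0 such that for every f ∈ L^p(μ): the integral T f(z) := ∫ f(ζ) k_γ(ζ, z) dμ(ζ) converges absolutely for μ-almost every z, and ‖T f‖_{L^p(μ)} ≤ C ‖f‖_{L^p(μ)}. -/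
open MeasureTheory Metric Filter Function Set
open scoped NNReal ENNReal Topology

/-!
Write `k(ζ, z) = ‖z‖^γ ‖ζ‖^(-γ) ‖ζ - z‖^(-(2n-1))`. Summing the upper Ahlfors bound over dyadic
shells bounds the Riesz potentials `∫ ‖ζ - w‖^(-α) dμ(ζ)` uniformly in `w` for `α < 2n`; splitting
at `‖ζ‖ = ‖z‖/2` then gives `∫ ‖ζ‖^(-β) ‖ζ - z‖^(-(2n-1)) dμ(ζ) ≲ ‖z‖^(-β)` for `β < 2n` and
bounded `z ≠ 0`. For `p = ∞` this with `β = γ` bounds `∫ k(ζ, z) dμ(ζ)`. For `p < ∞` we run the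
Schur test with weight `h(w) = ‖w‖^(-γ/p)`: the first Schur integral is the estimate above with
`β = γq` (`q` the conjugate exponent), which needs `γq < 2n`, i.e. `p > 2n/(2n-γ)`; the second
is `‖ζ‖^(-γ)` times a Riesz potential. The bound on the positive operator
`|f| ↦ ∫ |f(ζ)| k(ζ, ·) dμ(ζ)` gives both the absolute convergence a.e. and the `L^p` estimate.
-/

section Schur

variable {α : Type*} [MeasurableSpace α] {μ : Measure α}

theorem rpow_lintegral_mul_le_weighted {p q : ℝ} (hpq : p.HolderConjugate q)
    {g k H : α → ℝ≥0∞} (hg : AEMeasurable g μ) (hk : AEMeasurable k μ) (hH : AEMeasurable H μ)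
    (hH0 : ∀ᵐ x ∂μ, H x ≠ 0) (hHtop : ∀ᵐ x ∂μ, H x ≠ ∞) :
    (∫⁻ x, g x * k x ∂μ) ^ p
      ≤ (∫⁻ x, (g x / H x) ^ p * k x ∂μ) * (∫⁻ x, H x ^ q * k x ∂μ) ^ (p / q) := by
  have hp := hpq.pos
  have hq := hpq.symm.pos
  have hsplit : ∫⁻ x, g x * k x ∂μ
      = ∫⁻ x, ((fun x => g x / H x * k x ^ (1 / p)) * (fun x => H x * k x ^ (1 / q))) x ∂μ := by
    refine lintegral_congr_ae ?_
    filter_upwards [hH0, hHtop] with x h0 htop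
    rw [Pi.mul_apply, mul_mul_mul_comm, ENNReal.div_mul_cancel h0 htop,
      ← ENNReal.rpow_add_of_nonneg _ _ (by positivity) (by positivity), one_div, one_div,
      hpq.inv_add_inv_eq_one, ENNReal.rpow_one]
  have hpow : ∀ (a b : ℝ≥0∞) {r : ℝ}, 0 < r → (a * b ^ (1 / r)) ^ r = a ^ r * b := by
    intro a b r hr
    rw [ENNReal.mul_rpow_of_nonneg _ _ hr.le, ← ENNReal.rpow_mul, one_div_mul_cancel hr.ne',
      ENNReal.rpow_one]
  calc (∫⁻ x, g x * k x ∂μ) ^ p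
      ≤ ((∫⁻ x, (g x / H x * k x ^ (1 / p)) ^ p ∂μ) ^ (1 / p)
          * (∫⁻ x, (H x * k x ^ (1 / q)) ^ q ∂μ) ^ (1 / q)) ^ p := by
        rw [hsplit]
        exact ENNReal.rpow_le_rpow (ENNReal.lintegral_mul_le_Lp_mul_Lq μ hpq
          ((hg.div hH).mul (hk.pow_const _)) (hH.mul (hk.pow_const _))) hp.le
    _ = (∫⁻ x, (g x / H x) ^ p * k x ∂μ) * (∫⁻ x, H x ^ q * k x ∂μ) ^ (p / q) := by
        simp_rw [hpow _ _ hp, hpow _ _ hq]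
        rw [ENNReal.mul_rpow_of_nonneg _ _ hp.le, ← ENNReal.rpow_mul, ← ENNReal.rpow_mul,
          one_div_mul_cancel hp.ne', ENNReal.rpow_one, one_div_mul_eq_div]

theorem eLpNormEssSup_lintegral_mul_le {K : α → α → ℝ≥0∞} (hK : Measurable (uncurry K))
    {A : ℝ≥0∞} (h : ∀ᵐ z ∂μ, ∫⁻ ζ, K ζ z ∂μ ≤ A) (g : α → ℝ≥0∞) :
    eLpNormEssSup (fun z => ∫⁻ ζ, g ζ * K ζ z ∂μ) μ ≤ A * eLpNormEssSup g μ := by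
  refine essSup_le_of_ae_le _ ?_
  filter_upwards [h] with z hz
  calc ‖∫⁻ ζ, g ζ * K ζ z ∂μ‖ₑ
      = ∫⁻ ζ, g ζ * K ζ z ∂μ := enorm_eq_self _
    _ ≤ ∫⁻ ζ, eLpNormEssSup g μ * K ζ z ∂μ :=
        lintegral_mono_ae ((enorm_ae_le_eLpNormEssSup g μ).mono fun ζ hζ => mul_le_mul_left hζ _)
    _ = eLpNormEssSup g μ * ∫⁻ ζ, K ζ z ∂μ :=
        lintegral_const_mul _ (hK.comp measurable_prodMk_right)
    _ ≤ A * eLpNormEssSup g μ := by rw [mul_comm]; exact mul_le_mul_left hz _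

variable [SFinite μ] {K : α → α → ℝ≥0∞}

theorem lintegral_rpow_lintegral_mul_le_of_schur (hK : Measurable (uncurry K)) {H : α → ℝ≥0∞}
    (hH : Measurable H) (hH0 : ∀ᵐ x ∂μ, H x ≠ 0) (hHtop : ∀ᵐ x ∂μ, H x ≠ ∞) {p q : ℝ}
    (hpq : p.HolderConjugate q) {A : ℝ≥0∞}
    (h₁ : ∀ᵐ z ∂μ, ∫⁻ ζ, K ζ z * H ζ ^ q ∂μ ≤ A * H z ^ q)
    (h₂ : ∀ᵐ ζ ∂μ, ∫⁻ z, K ζ z * H z ^ p ∂μ ≤ A * H ζ ^ p) {g : α → ℝ≥0∞} (hg : Measurable g) :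
    ∫⁻ z, (∫⁻ ζ, g ζ * K ζ z ∂μ) ^ p ∂μ ≤ A ^ p * ∫⁻ x, g x ^ p ∂μ := by
  have hp := hpq.pos
  have hq := hpq.symm.pos
  set G : α → ℝ≥0∞ := fun ζ => (g ζ / H ζ) ^ p
  have hG : Measurable G := (hg.div hH).pow_const p
  have hKz : ∀ z, Measurable fun ζ => K ζ z := fun z => hK.comp measurable_prodMk_right
  have hGK : Measurable fun x : α × α => G x.1 * K x.1 x.2 := (hG.comp measurable_fst).mul hK
  have hpointwise : ∀ᵐ z ∂μ, (∫⁻ ζ, g ζ * K ζ z ∂μ) ^ p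
      ≤ A ^ (p / q) * (H z ^ p * ∫⁻ ζ, G ζ * K ζ z ∂μ) := by
    filter_upwards [h₁] with z hz
    calc (∫⁻ ζ, g ζ * K ζ z ∂μ) ^ p
        ≤ (∫⁻ ζ, G ζ * K ζ z ∂μ) * (∫⁻ ζ, H ζ ^ q * K ζ z ∂μ) ^ (p / q) :=
          rpow_lintegral_mul_le_weighted hpq hg.aemeasurable (hKz z).aemeasurable
            hH.aemeasurable hH0 hHtop
      _ ≤ (∫⁻ ζ, G ζ * K ζ z ∂μ) * (A * H z ^ q) ^ (p / q) := by
          gcongr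
          simpa only [mul_comm] using hz
      _ = A ^ (p / q) * (H z ^ p * ∫⁻ ζ, G ζ * K ζ z ∂μ) := by
          rw [ENNReal.mul_rpow_of_nonneg _ _ (by positivity), ← ENNReal.rpow_mul,
            mul_div_cancel₀ _ hq.ne']
          ring
  have hswap : ∫⁻ z, H z ^ p * ∫⁻ ζ, G ζ * K ζ z ∂μ ∂μ
      = ∫⁻ ζ, G ζ * ∫⁻ z, K ζ z * H z ^ p ∂μ ∂μ := by
    calc ∫⁻ z, H z ^ p * ∫⁻ ζ, G ζ * K ζ z ∂μ ∂μ
        = ∫⁻ z, ∫⁻ ζ, H z ^ p * (G ζ * K ζ z) ∂μ ∂μ :=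
          lintegral_congr fun z => (lintegral_const_mul _ (hGK.comp measurable_prodMk_right)).symm
      _ = ∫⁻ ζ, ∫⁻ z, H z ^ p * (G ζ * K ζ z) ∂μ ∂μ :=
          lintegral_lintegral_swap (((hH.pow_const p).comp measurable_fst).mul
            (hGK.comp measurable_swap)).aemeasurable
      _ = ∫⁻ ζ, G ζ * ∫⁻ z, K ζ z * H z ^ p ∂μ ∂μ := by
          refine lintegral_congr fun ζ => ?_
          rw [← lintegral_const_mul _ (show Measurable fun z => K ζ z * H z ^ p from
            (hK.comp measurable_prodMk_left).mul (hH.pow_const p))]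
          exact lintegral_congr fun z => by ring
  have hGH : ∀ᵐ ζ ∂μ, G ζ * (A * H ζ ^ p) = A * g ζ ^ p := by
    filter_upwards [hH0, hHtop] with ζ h0 htop
    rw [mul_left_comm, ← ENNReal.mul_rpow_of_nonneg _ _ hp.le, ENNReal.div_mul_cancel h0 htop]
  have hexp : A ^ (p / q) * A = A ^ p := by
    have hpq' : p / q + 1 = p := by
      have := hpq.sub_one_mul_conj
      field_simp
      linarith
    calc A ^ (p / q) * A = A ^ (p / q) * A ^ (1 : ℝ) := by rw [ENNReal.rpow_one]
      _ = A ^ p := by rw [← ENNReal.rpow_add_of_nonneg _ _ (by positivity) zero_le_one, hpq']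
  calc ∫⁻ z, (∫⁻ ζ, g ζ * K ζ z ∂μ) ^ p ∂μ
      ≤ ∫⁻ z, A ^ (p / q) * (H z ^ p * ∫⁻ ζ, G ζ * K ζ z ∂μ) ∂μ := lintegral_mono_ae hpointwise
    _ = A ^ (p / q) * ∫⁻ ζ, G ζ * ∫⁻ z, K ζ z * H z ^ p ∂μ ∂μ := by
        rw [lintegral_const_mul _ (show Measurable fun z => H z ^ p * ∫⁻ ζ, G ζ * K ζ z ∂μ from
          (hH.pow_const p).mul hGK.lintegral_prod_left'), hswap]
    _ ≤ A ^ (p / q) * ∫⁻ ζ, G ζ * (A * H ζ ^ p) ∂μ :=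
        mul_le_mul_right (lintegral_mono_ae (h₂.mono fun ζ hζ => mul_le_mul_right hζ _)) _
    _ = A ^ p * ∫⁻ x, g x ^ p ∂μ := by
        rw [lintegral_congr_ae hGH, lintegral_const_mul _ (hg.pow_const p), ← mul_assoc, hexp]

theorem eLpNorm'_lintegral_mul_le_of_schur (hK : Measurable (uncurry K)) {H : α → ℝ≥0∞}
    (hH : Measurable H) (hH0 : ∀ᵐ x ∂μ, H x ≠ 0) (hHtop : ∀ᵐ x ∂μ, H x ≠ ∞) {p q : ℝ}
    (hpq : p.HolderConjugate q) {A : ℝ≥0∞}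
    (h₁ : ∀ᵐ z ∂μ, ∫⁻ ζ, K ζ z * H ζ ^ q ∂μ ≤ A * H z ^ q)
    (h₂ : ∀ᵐ ζ ∂μ, ∫⁻ z, K ζ z * H z ^ p ∂μ ≤ A * H ζ ^ p) {g : α → ℝ≥0∞} (hg : Measurable g) :
    eLpNorm' (fun z => ∫⁻ ζ, g ζ * K ζ z ∂μ) p μ ≤ A * eLpNorm' g p μ := by
  have hp := hpq.pos
  simp only [eLpNorm'_eq_lintegral_enorm, enorm_eq_self]
  calc (∫⁻ z, (∫⁻ ζ, g ζ * K ζ z ∂μ) ^ p ∂μ) ^ (1 / p)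
      ≤ (A ^ p * ∫⁻ x, g x ^ p ∂μ) ^ (1 / p) :=
        ENNReal.rpow_le_rpow (lintegral_rpow_lintegral_mul_le_of_schur hK hH hH0 hHtop hpq h₁ h₂ hg)
          (by positivity)
    _ = A * (∫⁻ x, g x ^ p ∂μ) ^ (1 / p) := by
        rw [ENNReal.mul_rpow_of_nonneg _ _ (by positivity), ← ENNReal.rpow_mul,
          mul_one_div_cancel hp.ne', ENNReal.rpow_one]

end Schur

section IntegralOperator

variable {α : Type*} [MeasurableSpace α] {μ : Measure α}

theorem ae_lt_top_of_eLpNorm_lt_top {F : α → ℝ≥0∞} (hF : AEMeasurable F μ) {p : ℝ≥0∞}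
    (hp : p ≠ 0) (h : eLpNorm F p μ < ∞) : ∀ᵐ x ∂μ, F x < ∞ := by
  rcases eq_or_ne p ∞ with rfl | hp_top
  · rw [eLpNorm_exponent_top] at h
    filter_upwards [enorm_ae_le_eLpNormEssSup F μ] with x hx
    exact hx.trans_lt h
  · rw [eLpNorm_lt_top_iff_lintegral_rpow_enorm_lt_top hp hp_top] at h
    filter_upwards [ae_lt_top' (hF.pow_const _) h.ne] with x hx
    exact (ENNReal.rpow_lt_top_iff_of_pos (ENNReal.toReal_pos hp hp_top)).1 hx

theorem integrable_and_eLpNorm_integral_mul_le [SFinite μ] {k : α → α → ℝ}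
    (hk : Measurable (uncurry k)) {p : ℝ≥0∞} (hp : p ≠ 0) {C : ℝ≥0∞} (hC : C ≠ ∞)
    (hT : ∀ g : α → ℝ≥0∞, Measurable g →
      eLpNorm (fun z => ∫⁻ ζ, g ζ * ‖k ζ z‖ₑ ∂μ) p μ ≤ C * eLpNorm g p μ)
    {f : α → ℂ} (hf : MemLp f p μ) :
    (∀ᵐ z ∂μ, Integrable (fun ζ => f ζ * (k ζ z : ℂ)) μ) ∧
      eLpNorm (fun z => ∫ ζ, f ζ * (k ζ z : ℂ) ∂μ) p μ ≤ C * eLpNorm f p μ := by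
  set f' := hf.1.mk f
  have hf' : Measurable fun ζ => ‖f' ζ‖ₑ := hf.1.stronglyMeasurable_mk.measurable.enorm
  set F : α → ℝ≥0∞ := fun z => ∫⁻ ζ, ‖f' ζ‖ₑ * ‖k ζ z‖ₑ ∂μ
  have hF_eq : ∀ z, ∫⁻ ζ, ‖f ζ * (k ζ z : ℂ)‖ₑ ∂μ = F z := fun z =>
    lintegral_congr_ae <| hf.1.ae_eq_mk.mono fun ζ hζ => by
      dsimp only
      rw [enorm_mul, hζ, ← ofReal_norm (k ζ z : ℂ), Complex.norm_real, ofReal_norm]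
  have hF_meas : Measurable F :=
    Measurable.lintegral_prod_left' ((hf'.comp measurable_fst).mul hk.enorm)
  have hF : eLpNorm F p μ ≤ C * eLpNorm f p μ := by
    calc eLpNorm F p μ ≤ C * eLpNorm (fun ζ => ‖f' ζ‖ₑ) p μ := hT _ hf'
      _ = C * eLpNorm f p μ := by rw [eLpNorm_enorm, eLpNorm_congr_ae hf.1.ae_eq_mk.symm]
  constructor
  · filter_upwards [ae_lt_top_of_eLpNorm_lt_top hF_meas.aemeasurable hp
      (hF.trans_lt (ENNReal.mul_lt_top hC.lt_top hf.2))] with z hz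
    refine ⟨hf.1.mul ?_, by rwa [hasFiniteIntegral_iff_enorm, hF_eq]⟩
    exact (Complex.measurable_ofReal.comp (hk.comp measurable_prodMk_right)).aestronglyMeasurable
  · refine (eLpNorm_mono_enorm fun z => ?_).trans hF
    rw [enorm_eq_self, ← hF_eq]
    exact enorm_integral_le_lintegral_enorm _

end IntegralOperator

theorem exists_div_two_pow_succ_le_and_lt {d r : ℝ} (hd : 0 < d) (hdr : d < r) :
    ∃ k : ℕ, r / 2 ^ (k + 1) ≤ d ∧ d < r / 2 ^ k := by
  classical
  have hex : ∃ k : ℕ, r / 2 ^ (k + 1) ≤ d := by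
    obtain ⟨k, hk⟩ := pow_unbounded_of_one_lt (r / d) one_lt_two
    refine ⟨k, (div_le_iff₀ (by positivity)).2 ?_⟩
    rw [div_lt_iff₀ hd] at hk
    linarith [mul_le_mul_of_nonneg_left
      (pow_le_pow_right₀ (one_le_two : (1 : ℝ) ≤ 2) (k.le_add_right 1)) hd.le]
  refine ⟨Nat.find hex, Nat.find_spec hex, ?_⟩
  rcases h : Nat.find hex with _ | k
  · simpa using hdr
  · exact lt_of_not_ge (Nat.find_min hex (h ▸ k.lt_succ_self))

theorem rpow_neg_mul_rpow_neg {x : ℝ} (hx : 0 ≤ x) {a b : ℝ} (ha : 0 ≤ a) (hb : 0 ≤ b) :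
    x ^ (-a) * x ^ (-b) = x ^ (-(a + b)) := by
  rw [Real.rpow_neg hx, Real.rpow_neg hx, Real.rpow_neg hx, ← mul_inv,
    Real.rpow_add_of_nonneg hx ha hb]

theorem div_two_pow_rpow (r c : ℝ) (hr : 0 ≤ r) (k : ℕ) :
    (r / 2 ^ k) ^ c = r ^ c * ((2 : ℝ) ^ (-c)) ^ k := by
  rw [Real.div_rpow hr (by positivity), ← Real.rpow_pow_comm zero_le_two, Real.rpow_neg zero_le_two,
    inv_pow, div_eq_mul_inv]

section UpperAhlfors

variable {E : Type*} [NormedAddCommGroup E] [MeasurableSpace E]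

def IsUpperAhlforsRegular (μ : Measure E) (s C R : ℝ) : Prop :=
  ∀ (w : E) (ρ : ℝ), 0 < ρ → ρ ≤ R → μ (ball w ρ) ≤ ENNReal.ofReal (C * ρ ^ s)

namespace IsUpperAhlforsRegular

variable {μ : Measure E} {s C R : ℝ}

theorem measure_singleton (hμ : IsUpperAhlforsRegular μ s C R) (hs : 0 < s) (hR : 0 < R)
    (w : E) : μ {w} = 0 := by
  have hlim : Tendsto (fun ρ : ℝ => ENNReal.ofReal (C * ρ ^ s)) (𝓝[>] 0) (𝓝 0) := by
    have h : Tendsto (fun ρ : ℝ => C * ρ ^ s) (𝓝[>] 0) (𝓝 (C * 0 ^ s)) :=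
      ((Real.continuousAt_rpow_const 0 s (Or.inr hs.le)).tendsto.mono_left
        nhdsWithin_le_nhds).const_mul C
    rw [Real.zero_rpow hs.ne', mul_zero] at h
    simpa using ENNReal.tendsto_ofReal h
  refine le_antisymm (ge_of_tendsto hlim ?_) bot_le
  filter_upwards [Ioc_mem_nhdsGT hR] with ρ hρ
  exact (measure_mono (singleton_subset_iff.2 (mem_ball_self hρ.1))).trans (hμ w ρ hρ.1 hρ.2)

theorem setLIntegral_ball_rpow_neg_le_of_le [BorelSpace E] (hμ : IsUpperAhlforsRegular μ s C R)
    {α : ℝ} (hα : 0 ≤ α) (hαs : α < s) :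
    ∃ D : ℝ≥0, ∀ (w : E) (r : ℝ), 0 < r → r ≤ R →
      ∫⁻ ζ in ball w r, ENNReal.ofReal (‖ζ - w‖ ^ (-α)) ∂μ ≤ D * ENNReal.ofReal (r ^ (s - α)) := by
  set c := s - α
  set q : ℝ := 2 ^ (-c)
  have hq : ENNReal.ofReal q < 1 :=
    ENNReal.ofReal_lt_one.2 (Real.rpow_lt_one_of_one_lt_of_neg one_lt_two (by linarith))
  set D : ℝ≥0∞ := ENNReal.ofReal (C * 2 ^ α) * (1 - ENNReal.ofReal q)⁻¹
  have hD : D ≠ ∞ :=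
    ENNReal.mul_ne_top ENNReal.ofReal_ne_top (ENNReal.inv_ne_top.2 (tsub_pos_of_lt hq).ne')
  refine ⟨D.toNNReal, fun w r hr hrR => ?_⟩
  rw [ENNReal.coe_toNNReal hD]
  set S : ℕ → Set E := fun k => ball w (r / 2 ^ k) \ ball w (r / 2 ^ (k + 1))
  have hcover : ball w r \ {w} ⊆ ⋃ k, S k := by
    rintro ζ ⟨hζr, hζw⟩
    obtain ⟨k, hk⟩ := exists_div_two_pow_succ_le_and_lt (dist_pos.2 hζw) (mem_ball.1 hζr)
    exact mem_iUnion.2 ⟨k, mem_ball.2 hk.2, fun h => (mem_ball.1 h).not_ge hk.1⟩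
  have hshell : ∀ k, ∫⁻ ζ in S k, ENNReal.ofReal (‖ζ - w‖ ^ (-α)) ∂μ
      ≤ ENNReal.ofReal (C * 2 ^ α) * ENNReal.ofReal (r ^ c) * ENNReal.ofReal q ^ k := by
    intro k
    set ρ := r / 2 ^ k
    have hρ : 0 < ρ := by positivity
    have hρR : ρ ≤ R := (div_le_self hr.le (one_le_pow₀ one_le_two)).trans hrR
    have hhalf : r / 2 ^ (k + 1) = ρ / 2 := by rw [pow_succ, div_div]
    have hbound :
        ∀ ζ ∈ S k, ENNReal.ofReal (‖ζ - w‖ ^ (-α)) ≤ ENNReal.ofReal ((ρ / 2) ^ (-α)) := by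
      rintro ζ ⟨-, hζ⟩
      rw [mem_ball, not_lt, dist_eq_norm, hhalf] at hζ
      exact ENNReal.ofReal_le_ofReal (Real.rpow_le_rpow_of_nonpos (by positivity) hζ (by linarith))
    have hreal : (ρ / 2) ^ (-α) * (C * ρ ^ s) = C * 2 ^ α * (r ^ c * q ^ k) := by
      rw [← div_two_pow_rpow r c hr.le k, Real.div_rpow hρ.le zero_le_two, Real.rpow_neg hρ.le,
        Real.rpow_neg zero_le_two, Real.rpow_sub hρ]
      field_simp
    calc ∫⁻ ζ in S k, ENNReal.ofReal (‖ζ - w‖ ^ (-α)) ∂μ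
        ≤ ∫⁻ _ in S k, ENNReal.ofReal ((ρ / 2) ^ (-α)) ∂μ :=
          setLIntegral_mono measurable_const hbound
      _ = ENNReal.ofReal ((ρ / 2) ^ (-α)) * μ (S k) := setLIntegral_const _ _
      _ ≤ ENNReal.ofReal ((ρ / 2) ^ (-α)) * ENNReal.ofReal (C * ρ ^ s) :=
          mul_le_mul_right ((measure_mono sdiff_subset).trans (hμ w ρ hρ hρR)) _
      _ = ENNReal.ofReal (C * 2 ^ α) * ENNReal.ofReal (r ^ c) * ENNReal.ofReal q ^ k := by
          rw [← ENNReal.ofReal_mul (by positivity), hreal, ENNReal.ofReal_mul' (by positivity),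
            ENNReal.ofReal_mul (p := r ^ c) (by positivity), ENNReal.ofReal_pow (by positivity),
            mul_assoc]
  have hw : μ {w} = 0 := hμ.measure_singleton (hα.trans_lt hαs) (hr.trans_le hrR) w
  calc ∫⁻ ζ in ball w r, ENNReal.ofReal (‖ζ - w‖ ^ (-α)) ∂μ
      = ∫⁻ ζ in ball w r \ {w}, ENNReal.ofReal (‖ζ - w‖ ^ (-α)) ∂μ :=
        setLIntegral_congr (sdiff_null_ae_eq_self hw).symm
    _ ≤ ∑' k, ∫⁻ ζ in S k, ENNReal.ofReal (‖ζ - w‖ ^ (-α)) ∂μ :=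
        (lintegral_mono_set hcover).trans (lintegral_iUnion_le _ _)
    _ ≤ ∑' k, ENNReal.ofReal (C * 2 ^ α) * ENNReal.ofReal (r ^ c) * ENNReal.ofReal q ^ k :=
        ENNReal.tsum_le_tsum hshell
    _ = D * ENNReal.ofReal (r ^ c) := by
        rw [ENNReal.tsum_mul_left, ENNReal.tsum_geometric]; ring

theorem lintegral_rpow_neg_le [BorelSpace E] [IsFiniteMeasure μ]
    (hμ : IsUpperAhlforsRegular μ s C R) (hR : 0 < R) {α : ℝ} (hα : 0 ≤ α) (hαs : α < s) :
    ∃ U : ℝ≥0, ∀ z : E, ∫⁻ ζ, ENNReal.ofReal (‖ζ - z‖ ^ (-α)) ∂μ ≤ U := by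
  obtain ⟨D, hD⟩ := hμ.setLIntegral_ball_rpow_neg_le_of_le hα hαs
  set U : ℝ≥0∞ := D * ENNReal.ofReal (R ^ (s - α)) + ENNReal.ofReal (R ^ (-α)) * μ univ
  have hU : U ≠ ∞ := by finiteness
  refine ⟨U.toNNReal, fun z => ?_⟩
  rw [ENNReal.coe_toNNReal hU, ← lintegral_add_compl _ (measurableSet_ball (x := z) (ε := R))]
  refine add_le_add (hD z R hR le_rfl) ?_
  have hfar : ∀ ζ ∈ (ball z R)ᶜ, ENNReal.ofReal (‖ζ - z‖ ^ (-α)) ≤ ENNReal.ofReal (R ^ (-α)) := by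
    intro ζ hζ
    rw [mem_compl_iff, mem_ball, not_lt, dist_eq_norm] at hζ
    exact ENNReal.ofReal_le_ofReal (Real.rpow_le_rpow_of_nonpos hR hζ (by linarith))
  calc ∫⁻ ζ in (ball z R)ᶜ, ENNReal.ofReal (‖ζ - z‖ ^ (-α)) ∂μ
      ≤ ∫⁻ _ in (ball z R)ᶜ, ENNReal.ofReal (R ^ (-α)) ∂μ := setLIntegral_mono measurable_const hfar
    _ ≤ ENNReal.ofReal (R ^ (-α)) * μ univ := by
        rw [setLIntegral_const]; exact mul_le_mul_right (measure_mono (subset_univ _)) _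

theorem setLIntegral_ball_rpow_neg_le [BorelSpace E] [IsFiniteMeasure μ]
    (hμ : IsUpperAhlforsRegular μ s C R) (hR : 0 < R) {α : ℝ} (hα : 0 ≤ α) (hαs : α < s) :
    ∃ V : ℝ≥0, ∀ (w : E) (r : ℝ), 0 < r →
      ∫⁻ ζ in ball w r, ENNReal.ofReal (‖ζ - w‖ ^ (-α)) ∂μ ≤ V * ENNReal.ofReal (r ^ (s - α)) := by
  obtain ⟨D, hD⟩ := hμ.setLIntegral_ball_rpow_neg_le_of_le hα hαs
  obtain ⟨U, hU⟩ := hμ.lintegral_rpow_neg_le hR hα hαs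
  set ρ := ENNReal.ofReal (R ^ (s - α))
  have hρ : ρ ≠ 0 := by simpa [ρ] using Real.rpow_pos_of_pos hR _
  have hV : (D + U / ρ : ℝ≥0∞) ≠ ∞ := by finiteness
  refine ⟨(D + U / ρ).toNNReal, fun w r hr => ?_⟩
  rw [ENNReal.coe_toNNReal hV]
  rcases le_or_gt r R with hrR | hRr
  · exact (hD w r hr hrR).trans (mul_le_mul_left le_self_add _)
  · calc ∫⁻ ζ in ball w r, ENNReal.ofReal (‖ζ - w‖ ^ (-α)) ∂μ
        ≤ U := (setLIntegral_le_lintegral _ _).trans (hU w)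
      _ = U / ρ * ρ := (ENNReal.div_mul_cancel hρ ENNReal.ofReal_ne_top).symm
      _ ≤ (D + U / ρ) * ENNReal.ofReal (r ^ (s - α)) := by
          gcongr
          · exact le_add_self
          · exact ENNReal.ofReal_le_ofReal (Real.rpow_le_rpow hR.le hRr.le (by linarith))

theorem lintegral_rpow_neg_mul_rpow_neg_sub_le [BorelSpace E] [IsFiniteMeasure μ]
    (hμ : IsUpperAhlforsRegular μ s C R) (hR : 0 < R) {β e : ℝ} (hβ : 0 ≤ β) (hβs : β < s)
    (he : 0 ≤ e) (hes : e < s) (B : ℝ) :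
    ∃ A : ℝ≥0, ∀ z : E, 0 < ‖z‖ → ‖z‖ ≤ B →
      ∫⁻ ζ, ENNReal.ofReal (‖ζ‖ ^ (-β) * ‖ζ - z‖ ^ (-e)) ∂μ ≤ A * ENNReal.ofReal (‖z‖ ^ (-β)) := by
  obtain ⟨V, hV⟩ := hμ.setLIntegral_ball_rpow_neg_le hR hβ hβs
  obtain ⟨U, hU⟩ := hμ.lintegral_rpow_neg_le hR he hes
  set A : ℝ≥0∞ := ENNReal.ofReal (2 ^ β) * (V * ENNReal.ofReal ((B / 2) ^ (s - e)) + U)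
  have hA : A ≠ ∞ := by finiteness
  refine ⟨A.toNNReal, fun z hz hzB => ?_⟩
  rw [ENNReal.coe_toNNReal hA]
  set t := ‖z‖ / 2 with ht_def
  have ht : 0 < t := by positivity
  have htβ : ENNReal.ofReal (t ^ (-β)) = ENNReal.ofReal (2 ^ β) * ENNReal.ofReal (‖z‖ ^ (-β)) := by
    rw [← ENNReal.ofReal_mul (by positivity), Real.div_rpow hz.le zero_le_two,
      Real.rpow_neg zero_le_two, div_inv_eq_mul, mul_comm]
  -- near the origin `‖ζ - z‖ ≥ t`, far from it `‖ζ‖ ≥ t`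
  have hnear : ∫⁻ ζ in ball 0 t, ENNReal.ofReal (‖ζ‖ ^ (-β) * ‖ζ - z‖ ^ (-e)) ∂μ
      ≤ ENNReal.ofReal (t ^ (-β)) * (V * ENNReal.ofReal ((B / 2) ^ (s - e))) := by
    have hpt : ∀ ζ ∈ ball (0 : E) t, ENNReal.ofReal (‖ζ‖ ^ (-β) * ‖ζ - z‖ ^ (-e))
        ≤ ENNReal.ofReal (t ^ (-e)) * ENNReal.ofReal (‖ζ‖ ^ (-β)) := by
      intro ζ hζ
      rw [mem_ball_zero_iff] at hζ
      have hζz : t ≤ ‖ζ - z‖ := by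
        have := norm_sub_norm_le z ζ
        rw [norm_sub_rev] at this
        linarith
      rw [← ENNReal.ofReal_mul (by positivity), mul_comm]
      exact ENNReal.ofReal_le_ofReal (mul_le_mul_of_nonneg_right
        (Real.rpow_le_rpow_of_nonpos ht hζz (by linarith)) (by positivity))
    have hreal : t ^ (-e) * t ^ (s - β) = t ^ (s - e) * t ^ (-β) := by
      rw [← Real.rpow_add ht, ← Real.rpow_add ht]; ring_nf
    calc ∫⁻ ζ in ball 0 t, ENNReal.ofReal (‖ζ‖ ^ (-β) * ‖ζ - z‖ ^ (-e)) ∂μ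
        ≤ ∫⁻ ζ in ball 0 t, ENNReal.ofReal (t ^ (-e)) * ENNReal.ofReal (‖ζ‖ ^ (-β)) ∂μ :=
          setLIntegral_mono (by fun_prop) hpt
      _ = ENNReal.ofReal (t ^ (-e)) * ∫⁻ ζ in ball 0 t, ENNReal.ofReal (‖ζ‖ ^ (-β)) ∂μ :=
          lintegral_const_mul _ (by fun_prop)
      _ ≤ ENNReal.ofReal (t ^ (-e)) * (V * ENNReal.ofReal (t ^ (s - β))) := by
          simpa using mul_le_mul_right (hV 0 t ht) (ENNReal.ofReal (t ^ (-e)))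
      _ = ENNReal.ofReal (t ^ (-β)) * (V * ENNReal.ofReal (t ^ (s - e))) := by
          rw [mul_left_comm, ← ENNReal.ofReal_mul (by positivity), hreal,
            ENNReal.ofReal_mul (by positivity)]
          ring
      _ ≤ ENNReal.ofReal (t ^ (-β)) * (V * ENNReal.ofReal ((B / 2) ^ (s - e))) := by
          gcongr
          linarith
  have hfar : ∫⁻ ζ in (ball 0 t)ᶜ, ENNReal.ofReal (‖ζ‖ ^ (-β) * ‖ζ - z‖ ^ (-e)) ∂μ
      ≤ ENNReal.ofReal (t ^ (-β)) * U := by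
    have hpt : ∀ ζ ∈ (ball (0 : E) t)ᶜ, ENNReal.ofReal (‖ζ‖ ^ (-β) * ‖ζ - z‖ ^ (-e))
        ≤ ENNReal.ofReal (t ^ (-β)) * ENNReal.ofReal (‖ζ - z‖ ^ (-e)) := by
      intro ζ hζ
      rw [mem_compl_iff, mem_ball_zero_iff, not_lt] at hζ
      rw [← ENNReal.ofReal_mul (by positivity)]
      exact ENNReal.ofReal_le_ofReal (mul_le_mul_of_nonneg_right
        (Real.rpow_le_rpow_of_nonpos ht hζ (by linarith)) (by positivity))
    calc ∫⁻ ζ in (ball 0 t)ᶜ, ENNReal.ofReal (‖ζ‖ ^ (-β) * ‖ζ - z‖ ^ (-e)) ∂μ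
        ≤ ∫⁻ ζ in (ball 0 t)ᶜ, ENNReal.ofReal (t ^ (-β)) * ENNReal.ofReal (‖ζ - z‖ ^ (-e)) ∂μ :=
          setLIntegral_mono (by fun_prop) hpt
      _ = ENNReal.ofReal (t ^ (-β)) * ∫⁻ ζ in (ball 0 t)ᶜ, ENNReal.ofReal (‖ζ - z‖ ^ (-e)) ∂μ :=
          lintegral_const_mul _ (by fun_prop)
      _ ≤ ENNReal.ofReal (t ^ (-β)) * U :=
          mul_le_mul_right ((setLIntegral_le_lintegral _ _).trans (hU z)) _
  calc ∫⁻ ζ, ENNReal.ofReal (‖ζ‖ ^ (-β) * ‖ζ - z‖ ^ (-e)) ∂μ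
      = _ + _ := (lintegral_add_compl _ measurableSet_ball).symm
    _ ≤ _ := add_le_add hnear hfar
    _ = A * ENNReal.ofReal (‖z‖ ^ (-β)) := by rw [← mul_add, htβ]; ring

end IsUpperAhlforsRegular

end UpperAhlfors

section Koppelman

variable {E : Type*} [NormedAddCommGroup E]

/-- Real `rpow` has `0 ^ (-γ) = 0` for `γ ≠ 0`, matching `x / 0 = 0` in
`‖z‖ ^ γ / (‖ζ‖ ^ γ * ‖ζ - z‖ ^ e)`, so the two kernels agree also on the singular set. -/
noncomputable def koppelmanKernel (γ e : ℝ) (ζ z : E) : ℝ≥0∞ :=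
  ENNReal.ofReal (‖z‖ ^ γ * (‖ζ‖ ^ (-γ) * ‖ζ - z‖ ^ (-e)))

theorem enorm_div_mul_pow_eq_koppelmanKernel (γ : ℝ) (m : ℕ) (ζ z : E) :
    ‖‖z‖ ^ γ / (‖ζ‖ ^ γ * ‖ζ - z‖ ^ m)‖ₑ = koppelmanKernel γ m ζ z := by
  rw [koppelmanKernel, Real.rpow_neg (norm_nonneg _), Real.rpow_neg (norm_nonneg _),
    Real.rpow_natCast, ← mul_inv, ← div_eq_mul_inv, Real.enorm_eq_ofReal (by positivity)]

variable [MeasurableSpace E]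

theorem measurable_koppelmanKernel [BorelSpace E] [SecondCountableTopology E] (γ e : ℝ) :
    Measurable (uncurry (koppelmanKernel (E := E) γ e)) := by
  unfold koppelmanKernel
  fun_prop

namespace IsUpperAhlforsRegular

variable {μ : Measure E} {s C R : ℝ}

theorem ae_norm_pos_and_le (hμ : IsUpperAhlforsRegular μ s C R) (hs : 0 < s) (hR : 0 < R)
    {R₁ : ℝ} (hsupp : μ (closedBall (0 : E) R₁)ᶜ = 0) : ∀ᵐ z ∂μ, 0 < ‖z‖ ∧ ‖z‖ ≤ R₁ := by
  have h0 : ∀ᵐ z ∂μ, z ≠ 0 := by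
    simpa [ae_iff] using hμ.measure_singleton hs hR 0
  filter_upwards [h0, ae_iff.2 hsupp] with z hz0 hz
  exact ⟨norm_pos_iff.2 hz0, mem_closedBall_zero_iff.1 hz⟩

variable [BorelSpace E] [IsFiniteMeasure μ]

theorem lintegral_koppelmanKernel_mul_le_left (hμ : IsUpperAhlforsRegular μ s C R)
    (hR : 0 < R) {γ e t : ℝ} (hγ : 0 ≤ γ) (ht : 0 ≤ t) (hγt : γ + t < s) (he : 0 ≤ e)
    (hes : e < s) (B : ℝ) :
    ∃ A : ℝ≥0, ∀ z : E, 0 < ‖z‖ → ‖z‖ ≤ B →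
      ∫⁻ ζ, koppelmanKernel γ e ζ z * ENNReal.ofReal (‖ζ‖ ^ (-t)) ∂μ
        ≤ A * ENNReal.ofReal (‖z‖ ^ (-t)) := by
  obtain ⟨A, hA⟩ := hμ.lintegral_rpow_neg_mul_rpow_neg_sub_le hR (add_nonneg hγ ht) hγt he hes B
  refine ⟨A, fun z hz hzB => ?_⟩
  have hpt : ∀ ζ, koppelmanKernel γ e ζ z * ENNReal.ofReal (‖ζ‖ ^ (-t))
      = ENNReal.ofReal (‖z‖ ^ γ) * ENNReal.ofReal (‖ζ‖ ^ (-(γ + t)) * ‖ζ - z‖ ^ (-e)) := by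
    intro ζ
    rw [koppelmanKernel, ← ENNReal.ofReal_mul (by positivity), ← ENNReal.ofReal_mul (by positivity),
      ← rpow_neg_mul_rpow_neg (norm_nonneg ζ) hγ ht]
    ring_nf
  calc ∫⁻ ζ, koppelmanKernel γ e ζ z * ENNReal.ofReal (‖ζ‖ ^ (-t)) ∂μ
      = ENNReal.ofReal (‖z‖ ^ γ) * ∫⁻ ζ, ENNReal.ofReal (‖ζ‖ ^ (-(γ + t)) * ‖ζ - z‖ ^ (-e)) ∂μ := by
        simp_rw [hpt]
        exact lintegral_const_mul _ (by fun_prop)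
    _ ≤ ENNReal.ofReal (‖z‖ ^ γ) * (A * ENNReal.ofReal (‖z‖ ^ (-(γ + t)))) :=
        mul_le_mul_right (hA z hz hzB) _
    _ = A * ENNReal.ofReal (‖z‖ ^ (-t)) := by
        rw [mul_left_comm, ← ENNReal.ofReal_mul (by positivity), ← Real.rpow_add hz, neg_add,
          add_neg_cancel_left]

theorem lintegral_koppelmanKernel_mul_le_right (hμ : IsUpperAhlforsRegular μ s C R) (hR : 0 < R)
    (γ : ℝ) {e : ℝ} (he : 0 ≤ e) (hes : e < s) :
    ∃ U : ℝ≥0, ∀ ζ : E, ∫⁻ z, koppelmanKernel γ e ζ z * ENNReal.ofReal (‖z‖ ^ (-γ)) ∂μ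
      ≤ U * ENNReal.ofReal (‖ζ‖ ^ (-γ)) := by
  obtain ⟨U, hU⟩ := hμ.lintegral_rpow_neg_le hR he hes
  refine ⟨U, fun ζ => ?_⟩
  have hpt : ∀ z, koppelmanKernel γ e ζ z * ENNReal.ofReal (‖z‖ ^ (-γ))
      ≤ ENNReal.ofReal (‖ζ‖ ^ (-γ)) * ENNReal.ofReal (‖z - ζ‖ ^ (-e)) := by
    intro z
    have hz : ‖z‖ ^ γ * ‖z‖ ^ (-γ) ≤ 1 := by
      rw [Real.rpow_neg (norm_nonneg _)]
      exact mul_inv_le_one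
    rw [koppelmanKernel, ← ENNReal.ofReal_mul (by positivity), ← ENNReal.ofReal_mul (by positivity),
      norm_sub_rev]
    refine ENNReal.ofReal_le_ofReal ?_
    calc ‖z‖ ^ γ * (‖ζ‖ ^ (-γ) * ‖z - ζ‖ ^ (-e)) * ‖z‖ ^ (-γ)
        = ‖z‖ ^ γ * ‖z‖ ^ (-γ) * (‖ζ‖ ^ (-γ) * ‖z - ζ‖ ^ (-e)) := by ring
      _ ≤ ‖ζ‖ ^ (-γ) * ‖z - ζ‖ ^ (-e) := mul_le_of_le_one_left (by positivity) hz
  calc ∫⁻ z, koppelmanKernel γ e ζ z * ENNReal.ofReal (‖z‖ ^ (-γ)) ∂μ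
      ≤ ∫⁻ z, ENNReal.ofReal (‖ζ‖ ^ (-γ)) * ENNReal.ofReal (‖z - ζ‖ ^ (-e)) ∂μ := lintegral_mono hpt
    _ = ENNReal.ofReal (‖ζ‖ ^ (-γ)) * ∫⁻ z, ENNReal.ofReal (‖z - ζ‖ ^ (-e)) ∂μ :=
        lintegral_const_mul _ (by fun_prop)
    _ ≤ U * ENNReal.ofReal (‖ζ‖ ^ (-γ)) := by rw [mul_comm]; exact mul_le_mul_left (hU ζ) _

variable [SecondCountableTopology E] {R₁ : ℝ}

theorem eLpNormEssSup_lintegral_koppelmanKernel_le (hμ : IsUpperAhlforsRegular μ s C R)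
    (hR : 0 < R) (hsupp : μ (closedBall (0 : E) R₁)ᶜ = 0) {γ e : ℝ} (hγ : 0 ≤ γ) (hγs : γ < s)
    (he : 0 ≤ e) (hes : e < s) :
    ∃ A : ℝ≥0, ∀ g : E → ℝ≥0∞,
      eLpNormEssSup (fun z => ∫⁻ ζ, g ζ * koppelmanKernel γ e ζ z ∂μ) μ
        ≤ A * eLpNormEssSup g μ := by
  obtain ⟨A, hA⟩ := hμ.lintegral_koppelmanKernel_mul_le_left hR hγ le_rfl (by simpa using hγs)
    he hes R₁
  refine ⟨A, eLpNormEssSup_lintegral_mul_le (measurable_koppelmanKernel γ e) ?_⟩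
  filter_upwards [hμ.ae_norm_pos_and_le (hγ.trans_lt hγs) hR hsupp] with z hz
  simpa using hA z hz.1 hz.2

theorem eLpNorm'_lintegral_koppelmanKernel_le (hμ : IsUpperAhlforsRegular μ s C R)
    (hR : 0 < R) (hsupp : μ (closedBall (0 : E) R₁)ᶜ = 0) {γ e : ℝ} (hγ : 0 ≤ γ)
    (he : 0 ≤ e) (hes : e < s) {p q : ℝ} (hpq : p.HolderConjugate q) (hγq : γ * q < s) :
    ∃ A : ℝ≥0, ∀ g : E → ℝ≥0∞, Measurable g →
      eLpNorm' (fun z => ∫⁻ ζ, g ζ * koppelmanKernel γ e ζ z ∂μ) p μ ≤ A * eLpNorm' g p μ := by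
  have hp := hpq.pos
  have hq := hpq.symm.pos
  have hγt : γ + γ / p * q = γ * q := by
    have := hpq.mul_eq_add
    field_simp
    linear_combination (-γ) * this
  obtain ⟨A₁, hA₁⟩ := hμ.lintegral_koppelmanKernel_mul_le_left hR hγ (by positivity)
    (hγt ▸ hγq) he hes R₁
  obtain ⟨A₂, hA₂⟩ := hμ.lintegral_koppelmanKernel_mul_le_right hR γ he hes
  set H : E → ℝ≥0∞ := fun w => ENNReal.ofReal (‖w‖ ^ (-(γ / p)))
  have hH : ∀ w r, 0 ≤ r → H w ^ r = ENNReal.ofReal (‖w‖ ^ (-(γ / p * r))) := by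
    intro w r hr
    rw [ENNReal.ofReal_rpow_of_nonneg (by positivity) hr, ← Real.rpow_mul (norm_nonneg _), neg_mul]
  have hHm : Measurable H := (measurable_norm.pow_const _).ennreal_ofReal
  have hae := hμ.ae_norm_pos_and_le ((mul_nonneg hγ hq.le).trans_lt hγq) hR hsupp
  refine ⟨max A₁ A₂, fun g hg => eLpNorm'_lintegral_mul_le_of_schur
    (measurable_koppelmanKernel γ e) hHm ?_ (ae_of_all _ fun _ => ENNReal.ofReal_ne_top) hpq ?_ ?_
    hg⟩
  · filter_upwards [hae] with w hw
    exact (ENNReal.ofReal_pos.2 (Real.rpow_pos_of_pos hw.1 _)).ne'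
  · filter_upwards [hae] with z hz
    simp_rw [hH _ q hq.le]
    exact (hA₁ z hz.1 hz.2).trans (mul_le_mul_left (by exact_mod_cast le_max_left _ _) _)
  · refine ae_of_all _ fun ζ => ?_
    simp_rw [hH _ p hp.le, div_mul_cancel₀ _ hp.ne']
    exact (hA₂ ζ).trans (mul_le_mul_left (by exact_mod_cast le_max_right _ _) _)

theorem eLpNorm_lintegral_koppelmanKernel_le (hμ : IsUpperAhlforsRegular μ s C R)
    (hR : 0 < R) (hsupp : μ (closedBall (0 : E) R₁)ᶜ = 0) {γ e : ℝ} (hγ : 0 ≤ γ) (hγs : γ < s)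
    (he : 0 ≤ e) (hes : e < s) {p : ℝ≥0∞} (hp : ENNReal.ofReal (s / (s - γ)) < p) :
    ∃ A : ℝ≥0, ∀ g : E → ℝ≥0∞, Measurable g →
      eLpNorm (fun z => ∫⁻ ζ, g ζ * koppelmanKernel γ e ζ z ∂μ) p μ ≤ A * eLpNorm g p μ := by
  rcases eq_or_ne p ∞ with rfl | hp_top
  · obtain ⟨A, hA⟩ := hμ.eLpNormEssSup_lintegral_koppelmanKernel_le hR hsupp hγ hγs he hes
    exact ⟨A, fun g _ => by simpa only [eLpNorm_exponent_top] using hA g⟩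
  have hsγ : 0 < s - γ := sub_pos.2 hγs
  have hps : s < p.toReal * (s - γ) := (div_lt_iff₀ hsγ).1
    ((ENNReal.ofReal_lt_iff_lt_toReal (div_pos (hγ.trans_lt hγs) hsγ).le hp_top).1 hp)
  have hp1 : 1 < p.toReal := by nlinarith
  have hγq : γ * p.toReal.conjExponent < s := by
    rw [Real.conjExponent, ← mul_div_assoc, div_lt_iff₀ (by linarith)]
    linarith
  obtain ⟨A, hA⟩ := hμ.eLpNorm'_lintegral_koppelmanKernel_le hR hsupp hγ he hes
    (Real.HolderConjugate.conjExponent hp1) hγq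
  have hp0 : p ≠ 0 := (bot_le.trans_lt hp).ne'
  exact ⟨A, fun g hg => by simpa only [eLpNorm_eq_eLpNorm' hp0 hp_top] using hA g hg⟩

end IsUpperAhlforsRegular

end Koppelman

theorem koppelman_kernel_Lp_bounded_general
    (n N : ℕ)
    [MeasurableSpace (EuclideanSpace ℂ (Fin N))] [BorelSpace (EuclideanSpace ℂ (Fin N))]
    (μ : Measure (EuclideanSpace ℂ (Fin N))) [IsFiniteMeasure μ]
    (R₁ : ℝ) (hsupp : μ ((closedBall (0 : EuclideanSpace ℂ (Fin N)) R₁)ᶜ) = 0)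
    (C₀ R : ℝ) (hR : 0 < R)
    (hAhlfors : ∀ (w : EuclideanSpace ℂ (Fin N)) (ρ : ℝ), 0 < ρ → ρ ≤ R →
      μ (ball w ρ) ≤ ENNReal.ofReal (C₀ * ρ ^ (2 * n)))
    (γ : ℝ) (hγ : 0 ≤ γ) (hγ' : γ < 2 * n)
    (p : ℝ≥0∞) (hp : ENNReal.ofReal (2 * n / (2 * n - γ)) < p) :
    ∃ C : ℝ, 0 < C ∧
      ∀ f : EuclideanSpace ℂ (Fin N) → ℂ, MemLp f p μ →
        (∀ᵐ z ∂μ, Integrable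
          (fun ζ => f ζ * ((‖z‖ ^ γ / (‖ζ‖ ^ γ * ‖ζ - z‖ ^ (2 * n - 1)) : ℝ) : ℂ)) μ) ∧
        eLpNorm
            (fun z => ∫ ζ, f ζ * ((‖z‖ ^ γ / (‖ζ‖ ^ γ * ‖ζ - z‖ ^ (2 * n - 1)) : ℝ) : ℂ) ∂μ)
            p μ ≤
          ENNReal.ofReal C * eLpNorm f p μ := by
  have hn : 1 ≤ n := by exact_mod_cast (show (0 : ℝ) < n by linarith)
  have hμ : IsUpperAhlforsRegular μ (2 * n) C₀ R := fun w ρ hρ hρR => by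
    simpa [← Real.rpow_natCast] using hAhlfors w ρ hρ hρR
  have hes : ((2 * n - 1 : ℕ) : ℝ) < 2 * n := by
    rw [Nat.cast_sub (by omega)]
    push_cast
    linarith
  obtain ⟨A, hA⟩ := hμ.eLpNorm_lintegral_koppelmanKernel_le hR hsupp hγ hγ' (Nat.cast_nonneg _)
    hes hp
  refine ⟨A + 1, by positivity, fun f hf =>
    integrable_and_eLpNorm_integral_mul_le (by fun_prop) (bot_le.trans_lt hp).ne'
      ENNReal.ofReal_ne_top (fun g hg => ?_) hf⟩
  simp_rw [enorm_div_mul_pow_eq_koppelmanKernel]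
  refine (hA g hg).trans (mul_le_mul_left ?_ _)
  rw [ENNReal.ofReal_add A.coe_nonneg zero_le_one, ENNReal.ofReal_coe_nnreal]
  exact le_self_add

/-- `L^p` boundedness of the Koppelman-type integral operator with kernel
`k_γ(ζ,z) = ‖z‖^γ / (‖ζ‖^γ ‖ζ-z‖^{2n-1})` for `2n/(2n-γ) < p ≤ ∞`, with respect to a
finite, boundedly supported measure with upper Ahlfors regularity bound of exponent `2n`. -/
theorem koppelman_kernel_Lp_bounded
    (n N : ℕ) (hn : 1 ≤ n) (hN : 1 ≤ N)
    [MeasurableSpace (EuclideanSpace ℂ (Fin N))] [BorelSpace (EuclideanSpace ℂ (Fin N))]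
    (μ : Measure (EuclideanSpace ℂ (Fin N))) [IsFiniteMeasure μ]
    (R₁ : ℝ) (hsupp : μ ((closedBall (0 : EuclideanSpace ℂ (Fin N)) R₁)ᶜ) = 0)
    (C₀ R : ℝ) (hC₀ : 0 < C₀) (hR : 0 < R)
    (hAhlfors : ∀ (w : EuclideanSpace ℂ (Fin N)) (ρ : ℝ), 0 < ρ → ρ ≤ R →
      μ (ball w ρ) ≤ ENNReal.ofReal (C₀ * ρ ^ (2 * n)))
    (γ : ℝ) (hγ : 0 ≤ γ) (hγ' : γ < 2 * n)
    (p : ℝ≥0∞) (hp : ENNReal.ofReal (2 * n / (2 * n - γ)) < p) :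
    ∃ C : ℝ, 0 < C ∧
      ∀ f : EuclideanSpace ℂ (Fin N) → ℂ, MemLp f p μ →
        (∀ᵐ z ∂μ, Integrable
          (fun ζ => f ζ * ((‖z‖ ^ γ / (‖ζ‖ ^ γ * ‖ζ - z‖ ^ (2 * n - 1)) : ℝ) : ℂ)) μ) ∧
        eLpNorm
            (fun z => ∫ ζ, f ζ * ((‖z‖ ^ γ / (‖ζ‖ ^ γ * ‖ζ - z‖ ^ (2 * n - 1)) : ℝ) : ℂ) ∂μ)
            p μ ≤
          ENNReal.ofReal C * eLpNorm f p μ :=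
  koppelman_kernel_Lp_bounded_general n N μ R₁ hsupp C₀ R hR hAhlfors γ hγ hγ' p hp
end

section
/- Let n ≥ 1 and N ≥ 1 be integers, and let μ be a finite Borel measure on ℂ^N with bounded support for which there are constants C₀ > 0 and R > 0 with μ(B_ρ(w)) ≤ C₀ ρ^{2n} for every w ∈ ℂ^N and every 0 < ρ ≤ R. Fix an integer 0 ≤ γ < 2n, a coordinate index i ∈ {1, …, N}, and define the kernel k̃_γ(ζ, z) := ( ‖z‖^γ / ‖ζ‖^γ ) · conj(ζ_i − z_i) / ‖ζ − z‖^{2n}. Then for every 0 ≤ α < 1 and every R₀ > 0 there exists a constant C > 0 such that for all z, w in the closed ball of radius R₀ about the origin with z ≠ w, z ≠ 0 ≠ w, one has ∫ |k̃_γ(ζ, z) − k̃_γ(ζ, w)| dμ(ζ) ≤ C · ‖z − w‖^α. -/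
/-!
Put `m = min (‖ζ - z‖, ‖ζ - w‖, ‖ζ‖)`. Since `‖z‖ ≤ ‖ζ‖ + ‖ζ - z‖`, the weight `‖z‖^γ / ‖ζ‖^γ` is
absorbed by `γ < 2n` powers of `m`, so each kernel is `O(m^(1-2n))`, while splitting the difference
into a change of weight and a change of the Bochner–Martinelli factor shows that it is
`O(‖z - w‖ m^(-2n))`. According as `‖z - w‖ ≥ m` or not, one of the two bounds gives
`‖z - w‖^α m^(-s)` with `s = 2n - 1 + α`, and `m^(-s)` is at most the sum of the three `(-s)`-th
powers. Because `s < 2n`, the layer-cake formula and the upper regularity of `μ` bound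
`∫ ‖ζ - v‖^(-s) dμ(ζ)` uniformly in `v`; points are `μ`-null, so the singularities do not matter.
-/

open MeasureTheory Metric Set Filter Topology
open scoped NNReal ENNReal

lemma pow_div_pow_mul_pow_le {a c e m : ℝ} {j γ t : ℕ} (ha : 0 ≤ a) (hm : 0 < m)
    (hmc : m ≤ c) (hme : m ≤ e) (hace : a ≤ c + e) (hjγ : j ≤ γ) (hjt : j ≤ t) :
    a ^ j / (c ^ γ * e ^ t) ≤ 2 ^ j / m ^ (γ + t - j) := by
  wlog hec : e ≤ c generalizing c e γ t
  · have := this hme hmc (by linarith) hjt hjγ (by linarith)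
    rwa [mul_comm, add_comm]
  have hc : 0 < c := hm.trans_le hmc
  have he : 0 < e := hm.trans_le hme
  rw [div_le_div_iff₀ (by positivity) (by positivity)]
  have hsplit : m ^ (γ + t - j) = m ^ (γ - j) * m ^ t := by
    rw [← pow_add]; congr 1; omega
  calc a ^ j * m ^ (γ + t - j) ≤ (2 * c) ^ j * (c ^ (γ - j) * e ^ t) := by
        rw [hsplit]
        gcongr
        linarith
    _ = 2 ^ j * (c ^ γ * e ^ t) := by
        rw [mul_pow, mul_assoc, ← mul_assoc (c ^ j), ← pow_add, Nat.add_sub_cancel' hjγ]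

lemma le_mul_rpow_mul_rpow_neg_add {x A r m α t : ℝ} (hA : 0 ≤ A) (hr : 0 ≤ r) (hm : 0 < m)
    (hα₀ : 0 ≤ α) (hα₁ : α ≤ 1) (h₀ : x ≤ A * m ^ (-t)) (h₁ : x ≤ A * r * m ^ (-(t + 1))) :
    x ≤ A * r ^ α * m ^ (-(t + α)) := by
  rcases le_total m r with hmr | hrm
  · calc x ≤ A * m ^ (-t) := h₀
      _ = A * m ^ α * m ^ (-(t + α)) := by
        rw [mul_assoc, ← Real.rpow_add hm]; ring_nf
      _ ≤ A * r ^ α * m ^ (-(t + α)) := by gcongr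
  · have hr_split : r = r ^ α * r ^ (1 - α) := by
      rw [← Real.rpow_add' hr (by norm_num), add_sub_cancel, Real.rpow_one]
    calc x ≤ A * r * m ^ (-(t + 1)) := h₁
      _ = A * r ^ α * (r ^ (1 - α) * m ^ (-(t + 1))) := by
        nth_rw 1 [hr_split]; ring
      _ ≤ A * r ^ α * (m ^ (1 - α) * m ^ (-(t + 1))) := by
        gcongr
      _ = A * r ^ α * m ^ (-(t + α)) := by
        rw [← Real.rpow_add hm]; ring_nf

lemma rpow_neg_min_le_add {a b c s : ℝ} (ha : 0 ≤ a) (hb : 0 ≤ b) (hc : 0 ≤ c) :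
    min (min a b) c ^ (-s) ≤ a ^ (-s) + b ^ (-s) + c ^ (-s) := by
  have := Real.rpow_nonneg ha (-s)
  have := Real.rpow_nonneg hb (-s)
  have := Real.rpow_nonneg hc (-s)
  rcases min_choice (min a b) c with h | h <;> rw [h]
  · rcases min_choice a b with h' | h' <;> rw [h'] <;> linarith
  · linarith

section Kernel

variable {E : Type*} [NormedAddCommGroup E]

noncomputable def homogeneousKernel (φ : E → ℂ) (k : ℕ) (v : E) : ℂ := φ v / ((‖v‖ ^ k : ℝ) : ℂ)

noncomputable def weightedKernel (φ : E → ℂ) (γ k : ℕ) (ζ z : E) : ℂ :=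
  ((‖z‖ ^ γ / ‖ζ‖ ^ γ : ℝ) : ℂ) * homogeneousKernel φ k (ζ - z)

variable {φ : E → ℂ} {γ k : ℕ}

lemma norm_homogeneousKernel_le (hφ : LipschitzWith 1 φ) (hφ0 : φ 0 = 0) (hk : k ≠ 0)
    {v : E} (hv : v ≠ 0) : ‖homogeneousKernel φ k v‖ ≤ 1 / ‖v‖ ^ (k - 1) := by
  have hv' : 0 < ‖v‖ := norm_pos_iff.mpr hv
  have hφv : ‖φ v‖ ≤ ‖v‖ := by simpa using hφ.norm_le_mul hφ0 v
  rw [homogeneousKernel, norm_div, Complex.norm_real, Real.norm_of_nonneg (by positivity),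
    ← mul_pow_sub_one hk, div_mul_eq_div_div, div_le_div_iff_of_pos_right (by positivity)]
  exact (div_le_one hv').mpr hφv

lemma norm_homogeneousKernel_sub_le (hφ : LipschitzWith 1 φ) (hφ0 : φ 0 = 0) (hk : k ≠ 0)
    {u v : E} (hu : u ≠ 0) (hv : v ≠ 0) :
    ‖homogeneousKernel φ k u - homogeneousKernel φ k v‖ ≤
      (k + 1) * ‖u - v‖ / min ‖u‖ ‖v‖ ^ k := by
  wlog hvu : ‖v‖ ≤ ‖u‖ generalizing u v
  · rw [norm_sub_rev, norm_sub_rev u, min_comm]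
    exact this hv hu (by linarith)
  have hu' : 0 < ‖u‖ := norm_pos_iff.mpr hu
  have hv' : 0 < ‖v‖ := norm_pos_iff.mpr hv
  have hφu : ‖φ u‖ ≤ ‖u‖ := by simpa using hφ.norm_le_mul hφ0 u
  have hφuv : ‖φ u - φ v‖ ≤ ‖u - v‖ := by simpa [dist_eq_norm] using hφ.dist_le_mul u v
  have hpow : |‖u‖ ^ k - ‖v‖ ^ k| ≤ ‖u - v‖ * k * ‖u‖ ^ (k - 1) := by
    have := abs_pow_sub_pow_le ‖u‖ ‖v‖ k
    rw [abs_norm, abs_norm, max_eq_left hvu] at this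
    exact this.trans (by gcongr; exact abs_norm_sub_norm_le u v)
  have hsplit : homogeneousKernel φ k u - homogeneousKernel φ k v =
      (φ u - φ v) / ((‖v‖ ^ k : ℝ) : ℂ) +
        φ u * (((‖v‖ ^ k - ‖u‖ ^ k) / (‖u‖ ^ k * ‖v‖ ^ k) : ℝ) : ℂ) := by
    simp only [homogeneousKernel]
    have : (‖u‖ : ℂ) ≠ 0 := by exact_mod_cast hu'.ne'
    have : (‖v‖ : ℂ) ≠ 0 := by exact_mod_cast hv'.ne'
    push_cast
    field_simp
    ring
  rw [min_eq_right hvu, hsplit]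
  refine (norm_add_le _ _).trans ?_
  rw [norm_div, norm_mul, Complex.norm_real, Complex.norm_real, Real.norm_of_nonneg (by positivity),
    Real.norm_eq_abs, abs_div, abs_sub_comm, abs_of_pos (by positivity : 0 < ‖u‖ ^ k * ‖v‖ ^ k)]
  calc ‖φ u - φ v‖ / ‖v‖ ^ k + ‖φ u‖ * (|‖u‖ ^ k - ‖v‖ ^ k| / (‖u‖ ^ k * ‖v‖ ^ k))
      ≤ ‖u - v‖ / ‖v‖ ^ k + ‖u‖ * (‖u - v‖ * k * ‖u‖ ^ (k - 1) / (‖u‖ ^ k * ‖v‖ ^ k)) := by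
        gcongr
    _ = (k + 1) * ‖u - v‖ / ‖v‖ ^ k := by
        rw [← mul_pow_sub_one hk ‖u‖]
        field_simp
        ring

lemma norm_weightedKernel_le (hφ : LipschitzWith 1 φ) (hφ0 : φ 0 = 0) (hγk : γ < k)
    {ζ z : E} (hζz : ζ ≠ z) {m : ℝ} (hm : 0 < m) (hmζ : m ≤ ‖ζ‖) (hmz : m ≤ ‖ζ - z‖) :
    ‖weightedKernel φ γ k ζ z‖ ≤ 2 ^ γ / m ^ (k - 1) := by
  have hkern := norm_homogeneousKernel_le (k := k) hφ hφ0 (by omega) (sub_ne_zero.mpr hζz)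
  have hweight := pow_div_pow_mul_pow_le (norm_nonneg z) hm hmζ hmz
    (by simpa only [norm_sub_rev] using norm_le_insert' z ζ) le_rfl (Nat.le_sub_one_of_lt hγk)
  rw [Nat.add_sub_cancel_left] at hweight
  rw [weightedKernel, norm_mul, Complex.norm_real, Real.norm_of_nonneg (by positivity)]
  calc ‖z‖ ^ γ / ‖ζ‖ ^ γ * ‖homogeneousKernel φ k (ζ - z)‖
      ≤ ‖z‖ ^ γ / ‖ζ‖ ^ γ * (1 / ‖ζ - z‖ ^ (k - 1)) := by gcongr
    _ = ‖z‖ ^ γ / (‖ζ‖ ^ γ * ‖ζ - z‖ ^ (k - 1)) := by rw [div_mul_div_comm, mul_one]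
    _ ≤ 2 ^ γ / m ^ (k - 1) := hweight

lemma abs_weight_sub_mul_norm_homogeneousKernel_le (hφ : LipschitzWith 1 φ) (hφ0 : φ 0 = 0)
    (hγk : γ < k) {ζ z w : E} (hwz : ‖w‖ ≤ ‖z‖) (hζz : ζ ≠ z) {m : ℝ} (hm : 0 < m)
    (hmζ : m ≤ ‖ζ‖) (hmz : m ≤ ‖ζ - z‖) :
    |‖z‖ ^ γ / ‖ζ‖ ^ γ - ‖w‖ ^ γ / ‖ζ‖ ^ γ| * ‖homogeneousKernel φ k (ζ - z)‖ ≤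
      γ * 2 ^ (γ - 1) * ‖z - w‖ / m ^ k := by
  rcases Nat.eq_zero_or_pos γ with rfl | hγ
  · simp
  have hζ : 0 < ‖ζ‖ := hm.trans_le hmζ
  have hpow : |‖z‖ ^ γ - ‖w‖ ^ γ| ≤ ‖z - w‖ * γ * ‖z‖ ^ (γ - 1) := by
    have := abs_pow_sub_pow_le ‖z‖ ‖w‖ γ
    rw [abs_norm, abs_norm, max_eq_left hwz] at this
    exact this.trans (by gcongr; exact abs_norm_sub_norm_le z w)
  have hkern := norm_homogeneousKernel_le (k := k) hφ hφ0 (by omega) (sub_ne_zero.mpr hζz)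
  have hweight := pow_div_pow_mul_pow_le (norm_nonneg z) hm hmζ hmz
    (by simpa only [norm_sub_rev] using norm_le_insert' z ζ)
    (Nat.sub_le γ 1) (by omega : γ - 1 ≤ k - 1)
  rw [show γ + (k - 1) - (γ - 1) = k by omega] at hweight
  calc |‖z‖ ^ γ / ‖ζ‖ ^ γ - ‖w‖ ^ γ / ‖ζ‖ ^ γ| * ‖homogeneousKernel φ k (ζ - z)‖
      ≤ ‖z - w‖ * γ * ‖z‖ ^ (γ - 1) / ‖ζ‖ ^ γ * (1 / ‖ζ - z‖ ^ (k - 1)) := by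
        rw [← sub_div, abs_div, abs_of_pos (by positivity : 0 < ‖ζ‖ ^ γ)]
        gcongr
    _ = ‖z - w‖ * γ * (‖z‖ ^ (γ - 1) / (‖ζ‖ ^ γ * ‖ζ - z‖ ^ (k - 1))) := by ring
    _ ≤ ‖z - w‖ * γ * (2 ^ (γ - 1) / m ^ k) := by gcongr
    _ = γ * 2 ^ (γ - 1) * ‖z - w‖ / m ^ k := by ring

lemma weight_mul_norm_homogeneousKernel_sub_le (hφ : LipschitzWith 1 φ) (hφ0 : φ 0 = 0)
    (hγk : γ < k) {ζ z w : E} (hwz : ‖w‖ ≤ ‖z‖) (hζz : ζ ≠ z) (hζw : ζ ≠ w) {m : ℝ}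
    (hm : 0 < m) (hmζ : m ≤ ‖ζ‖) (hmz : m ≤ ‖ζ - z‖) (hmw : m ≤ ‖ζ - w‖) :
    ‖w‖ ^ γ / ‖ζ‖ ^ γ * ‖homogeneousKernel φ k (ζ - z) - homogeneousKernel φ k (ζ - w)‖ ≤
      (k + 1) * 2 ^ γ * ‖z - w‖ / m ^ k := by
  set e := min ‖ζ - z‖ ‖ζ - w‖
  have hkern := norm_homogeneousKernel_sub_le (k := k) hφ hφ0 (by omega)
    (sub_ne_zero.mpr hζz) (sub_ne_zero.mpr hζw)
  rw [show ζ - z - (ζ - w) = -(z - w) by abel, norm_neg] at hkern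
  have hwe : ‖w‖ ≤ ‖ζ‖ + e := by
    have h₁ := norm_le_insert' w ζ
    have h₂ := norm_le_insert' z ζ
    rw [norm_sub_rev] at h₁ h₂
    rcases min_choice ‖ζ - z‖ ‖ζ - w‖ with h | h <;> simp only [e, h] <;> linarith
  have hweight := pow_div_pow_mul_pow_le (norm_nonneg w) hm hmζ (le_min hmz hmw) hwe
    le_rfl hγk.le
  rw [Nat.add_sub_cancel_left] at hweight
  calc ‖w‖ ^ γ / ‖ζ‖ ^ γ * ‖homogeneousKernel φ k (ζ - z) - homogeneousKernel φ k (ζ - w)‖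
      ≤ ‖w‖ ^ γ / ‖ζ‖ ^ γ * ((k + 1) * ‖z - w‖ / e ^ k) := by gcongr
    _ = (k + 1) * ‖z - w‖ * (‖w‖ ^ γ / (‖ζ‖ ^ γ * e ^ k)) := by field_simp
    _ ≤ (k + 1) * ‖z - w‖ * (2 ^ γ / m ^ k) := by gcongr
    _ = (k + 1) * 2 ^ γ * ‖z - w‖ / m ^ k := by ring

lemma norm_weightedKernel_sub_le (hφ : LipschitzWith 1 φ) (hφ0 : φ 0 = 0) (hγk : γ < k)
    {ζ z w : E} (hwz : ‖w‖ ≤ ‖z‖) (hζz : ζ ≠ z) (hζw : ζ ≠ w) {m : ℝ} (hm : 0 < m)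
    (hmζ : m ≤ ‖ζ‖) (hmz : m ≤ ‖ζ - z‖) (hmw : m ≤ ‖ζ - w‖) :
    ‖weightedKernel φ γ k ζ z - weightedKernel φ γ k ζ w‖ ≤
      (γ * 2 ^ (γ - 1) + (k + 1) * 2 ^ γ) * ‖z - w‖ / m ^ k := by
  have hsplit : weightedKernel φ γ k ζ z - weightedKernel φ γ k ζ w =
      ((‖z‖ ^ γ / ‖ζ‖ ^ γ - ‖w‖ ^ γ / ‖ζ‖ ^ γ : ℝ) : ℂ) * homogeneousKernel φ k (ζ - z) +
        ((‖w‖ ^ γ / ‖ζ‖ ^ γ : ℝ) : ℂ) *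
          (homogeneousKernel φ k (ζ - z) - homogeneousKernel φ k (ζ - w)) := by
    simp only [weightedKernel]
    push_cast
    ring
  rw [hsplit]
  refine (norm_add_le _ _).trans ?_
  rw [norm_mul, norm_mul, Complex.norm_real, Complex.norm_real, Real.norm_eq_abs,
    Real.norm_of_nonneg (by positivity), add_mul, add_div]
  exact add_le_add
    (abs_weight_sub_mul_norm_homogeneousKernel_le hφ hφ0 hγk hwz hζz hm hmζ hmz)
    ((weight_mul_norm_homogeneousKernel_sub_le hφ hφ0 hγk hwz hζz hζw hm hmζ hmz hmw).trans_eq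
      (by ring))

lemma norm_weightedKernel_sub_le_rpow (hφ : LipschitzWith 1 φ) (hφ0 : φ 0 = 0) (hγk : γ < k)
    {α : ℝ} (hα₀ : 0 ≤ α) (hα₁ : α ≤ 1) {ζ z w : E} (hζ : ζ ≠ 0) (hζz : ζ ≠ z) (hζw : ζ ≠ w) :
    ‖weightedKernel φ γ k ζ z - weightedKernel φ γ k ζ w‖ ≤
      2 ^ γ * (γ + k + 1) * ‖z - w‖ ^ α * (‖ζ - z‖ ^ (-(k - 1 + α)) +
        ‖ζ - w‖ ^ (-(k - 1 + α)) + ‖ζ‖ ^ (-(k - 1 + α))) := by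
  wlog hwz : ‖w‖ ≤ ‖z‖ generalizing z w
  · have := this hζw hζz (le_of_not_ge hwz)
    rwa [norm_sub_rev, norm_sub_rev w, add_comm (‖ζ - w‖ ^ _)] at this
  set m := min (min ‖ζ - z‖ ‖ζ - w‖) ‖ζ‖
  have hm : 0 < m := lt_min (lt_min (norm_pos_iff.mpr (sub_ne_zero.mpr hζz))
    (norm_pos_iff.mpr (sub_ne_zero.mpr hζw))) (norm_pos_iff.mpr hζ)
  have hmz : m ≤ ‖ζ - z‖ := (min_le_left _ _).trans (min_le_left _ _)
  have hmw : m ≤ ‖ζ - w‖ := (min_le_left _ _).trans (min_le_right _ _)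
  have hmζ : m ≤ ‖ζ‖ := min_le_right _ _
  have hk : ((k - 1 : ℕ) : ℝ) = k - 1 := by rw [Nat.cast_sub (by omega), Nat.cast_one]
  have htwo : (2 : ℝ) ^ (γ - 1) ≤ 2 ^ γ := pow_le_pow_right₀ (by norm_num) (Nat.sub_le γ 1)
  have hsize : ‖weightedKernel φ γ k ζ z - weightedKernel φ γ k ζ w‖ ≤
      2 ^ γ * (γ + k + 1) * m ^ (-((k : ℝ) - 1)) := by
    rw [Real.rpow_neg hm.le, ← hk, Real.rpow_natCast]
    refine (norm_sub_le _ _).trans ?_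
    have hz := norm_weightedKernel_le hφ hφ0 hγk hζz hm hmζ hmz
    have hw := norm_weightedKernel_le hφ hφ0 hγk hζw hm hmζ hmw
    calc _ ≤ 2 ^ γ / m ^ (k - 1) + 2 ^ γ / m ^ (k - 1) := add_le_add hz hw
      _ ≤ 2 ^ γ * (γ + k + 1) * (m ^ (k - 1))⁻¹ := by
        rw [← add_div, div_eq_mul_inv]
        gcongr
        nlinarith [(by positivity : (0 : ℝ) ≤ γ), pow_pos (two_pos : (0 : ℝ) < 2) γ]
  have hlip : ‖weightedKernel φ γ k ζ z - weightedKernel φ γ k ζ w‖ ≤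
      2 ^ γ * (γ + k + 1) * ‖z - w‖ * m ^ (-((k : ℝ) - 1 + 1)) := by
    rw [sub_add_cancel, Real.rpow_neg hm.le, Real.rpow_natCast]
    refine (norm_weightedKernel_sub_le hφ hφ0 hγk hwz hζz hζw hm hmζ hmz hmw).trans ?_
    rw [div_eq_mul_inv]
    gcongr
    nlinarith [(by positivity : (0 : ℝ) ≤ γ)]
  calc _ ≤ 2 ^ γ * (γ + k + 1) * ‖z - w‖ ^ α * m ^ (-((k : ℝ) - 1 + α)) :=
        le_mul_rpow_mul_rpow_neg_add (by positivity) (norm_nonneg _) hm hα₀ hα₁ hsize hlip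
    _ ≤ _ := by
        gcongr
        exact rpow_neg_min_le_add (norm_nonneg _) (norm_nonneg _) (norm_nonneg _)

end Kernel

section UpperRegular

variable {X : Type*} [MeasurableSpace X] {μ : Measure X} {C R : ℝ} {d : ℕ}

lemma measure_singleton_eq_zero_of_measure_ball_le [PseudoMetricSpace X] (hR : 0 < R)
    (hd : d ≠ 0) (hball : ∀ v ρ, 0 < ρ → ρ ≤ R → μ (ball v ρ) ≤ ENNReal.ofReal (C * ρ ^ d))
    (v : X) : μ {v} = 0 := by
  have hlim : Filter.Tendsto (fun ρ : ℝ => ENNReal.ofReal (C * ρ ^ d)) (𝓝[>] 0) (𝓝 0) := by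
    have : Continuous fun ρ : ℝ => ENNReal.ofReal (C * ρ ^ d) :=
      ENNReal.continuous_ofReal.comp (by fun_prop)
    simpa [zero_pow hd] using (this.tendsto 0).mono_left nhdsWithin_le_nhds
  have hsmall : ∀ᶠ ρ in 𝓝[>] (0 : ℝ), μ {v} ≤ ENNReal.ofReal (C * ρ ^ d) := by
    filter_upwards [Ioo_mem_nhdsGT hR] with ρ hρ
    exact (measure_mono (singleton_subset_iff.mpr (mem_ball_self hρ.1))).trans
      (hball v ρ hρ.1 hρ.2.le)
  exact le_antisymm (ge_of_tendsto hlim hsmall) zero_le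

lemma exists_lintegral_rpow_neg_le [SeminormedAddCommGroup X] [OpensMeasurableSpace X]
    [IsFiniteMeasure μ] {s : ℝ} (hR : 0 < R) (hs : 0 < s) (hsd : s < d)
    (hball : ∀ v ρ, 0 < ρ → ρ ≤ R → μ (ball v ρ) ≤ ENNReal.ofReal (C * ρ ^ d)) :
    ∃ K : ℝ≥0, ∀ v, ∫⁻ ζ, ENNReal.ofReal (‖ζ - v‖ ^ (-s)) ∂μ ≤ K := by
  set T := R ^ (-s)
  have hT : 0 < T := Real.rpow_pos_of_pos hR _
  set tail := ∫⁻ t in Ioi T, ENNReal.ofReal (C * t ^ (-(d / s)))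
  have htail : tail ≠ ∞ := by
    have hexp : -((d : ℝ) / s) < -1 := by rw [neg_lt_neg_iff, one_lt_div hs]; exact hsd
    exact ((integrableOn_Ioi_rpow_of_lt hexp hT).const_mul C).lintegral_lt_top.ne
  have hlevel : ∀ (v : X) (t : ℝ), 0 < t →
      {ζ : X | t < ‖ζ - v‖ ^ (-s)} ⊆ ball v (t ^ (-s)⁻¹) := by
    intro v t ht ζ hζ
    replace hζ : t < ‖ζ - v‖ ^ (-s) := hζ
    rw [mem_ball, dist_eq_norm]
    rcases (norm_nonneg (ζ - v)).eq_or_lt with h | h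
    · rw [← h, Real.zero_rpow (neg_ne_zero.mpr hs.ne')] at hζ
      exact absurd hζ ht.not_gt
    · calc ‖ζ - v‖ = (‖ζ - v‖ ^ (-s)) ^ (-s)⁻¹ := (Real.rpow_rpow_inv h.le (by linarith)).symm
        _ < t ^ (-s)⁻¹ := Real.rpow_lt_rpow_of_neg ht hζ (by simpa using hs)
  have hfar : ∀ (v : X) (t : ℝ), T < t →
      μ (ball v (t ^ (-s)⁻¹)) ≤ ENNReal.ofReal (C * t ^ (-(d / s))) := by
    intro v t ht
    have hρR : t ^ (-s)⁻¹ ≤ R := by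
      calc t ^ (-s)⁻¹ ≤ T ^ (-s)⁻¹ :=
            (Real.rpow_lt_rpow_of_neg hT ht (by simpa using hs)).le
        _ = R := Real.rpow_rpow_inv hR.le (by linarith)
    convert hball v _ (Real.rpow_pos_of_pos (hT.trans ht) _) hρR using 3
    rw [← Real.rpow_natCast, ← Real.rpow_mul (hT.trans ht).le]
    congr 1
    field_simp
  refine ⟨(μ univ * ENNReal.ofReal T + tail).toNNReal, fun v => ?_⟩
  rw [ENNReal.coe_toNNReal (by finiteness)]
  have hmeas : AEMeasurable (fun ζ => ‖ζ - v‖ ^ (-s)) μ :=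
    ((continuous_id.sub continuous_const).norm.measurable.pow_const _).aemeasurable
  calc ∫⁻ ζ, ENNReal.ofReal (‖ζ - v‖ ^ (-s)) ∂μ
      = ∫⁻ t in Ioi 0, μ {ζ | t < ‖ζ - v‖ ^ (-s)} :=
        lintegral_eq_lintegral_meas_lt μ (ae_of_all _ fun ζ => by positivity) hmeas
    _ ≤ (∫⁻ t in Ioc 0 T, μ {ζ | t < ‖ζ - v‖ ^ (-s)}) +
          ∫⁻ t in Ioi T, μ {ζ | t < ‖ζ - v‖ ^ (-s)} := by
        rw [← Ioc_union_Ioi_eq_Ioi hT.le]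
        exact lintegral_union_le _ _ _
    _ ≤ (∫⁻ _ in Ioc 0 T, μ univ) + tail := by
        refine add_le_add (setLIntegral_mono' measurableSet_Ioc fun t _ => measure_mono
          (subset_univ _)) (setLIntegral_mono' measurableSet_Ioi fun t ht => ?_)
        exact (measure_mono (hlevel v t (hT.trans ht))).trans (hfar v t ht)
    _ = μ univ * ENNReal.ofReal T + tail := by
        rw [setLIntegral_const, Real.volume_Ioc, sub_zero, mul_comm]

lemma lintegral_le_of_ae_le_rpow_neg_add [SeminormedAddCommGroup X] [OpensMeasurableSpace X]
    {s c : ℝ} {K : ℝ≥0} (hK : ∀ v, ∫⁻ ζ, ENNReal.ofReal (‖ζ - v‖ ^ (-s)) ∂μ ≤ K) (hc : 0 ≤ c)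
    {g : X → ℝ} {a b e : X}
    (hg : ∀ᵐ ζ ∂μ, g ζ ≤ c * (‖ζ - a‖ ^ (-s) + ‖ζ - b‖ ^ (-s) + ‖ζ - e‖ ^ (-s))) :
    ∫⁻ ζ, ENNReal.ofReal (g ζ) ∂μ ≤ ENNReal.ofReal (c * (3 * K)) := by
  set f := fun v ζ : X => ENNReal.ofReal (‖ζ - v‖ ^ (-s))
  have hf : ∀ v, Measurable (f v) := fun v =>
    ((continuous_id.sub continuous_const).norm.measurable.pow_const _).ennreal_ofReal
  have hpoint : ∀ᵐ ζ ∂μ, ENNReal.ofReal (g ζ) ≤ ENNReal.ofReal c * (f a ζ + f b ζ + f e ζ) := by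
    filter_upwards [hg] with ζ hζ
    have ha := Real.rpow_nonneg (norm_nonneg (ζ - a)) (-s)
    have hb := Real.rpow_nonneg (norm_nonneg (ζ - b)) (-s)
    have he := Real.rpow_nonneg (norm_nonneg (ζ - e)) (-s)
    rw [← ENNReal.ofReal_add ha hb, ← ENNReal.ofReal_add (add_nonneg ha hb) he,
      ← ENNReal.ofReal_mul hc]
    exact ENNReal.ofReal_le_ofReal hζ
  calc ∫⁻ ζ, ENNReal.ofReal (g ζ) ∂μ
      ≤ ENNReal.ofReal c * (∫⁻ ζ, f a ζ ∂μ + ∫⁻ ζ, f b ζ ∂μ + ∫⁻ ζ, f e ζ ∂μ) := by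
        rw [← lintegral_add_right _ (hf b), ← lintegral_add_right _ (hf e),
          ← lintegral_const_mul' _ _ ENNReal.ofReal_ne_top]
        exact lintegral_mono_ae hpoint
    _ ≤ ENNReal.ofReal c * (K + K + K) := by gcongr <;> exact hK _
    _ = ENNReal.ofReal (c * (3 * K)) := by
        rw [ENNReal.ofReal_mul hc, ENNReal.ofReal_mul zero_le_three, ENNReal.ofReal_ofNat,
          ENNReal.ofReal_coe_nnreal]
        ring

end UpperRegular

lemma lipschitzWith_conj_apply {N : ℕ} (i : Fin N) :
    LipschitzWith 1 fun v : EuclideanSpace ℂ (Fin N) => starRingEnd ℂ (v i) :=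
  LipschitzWith.of_dist_le_mul fun x y => by
    simpa [dist_eq_norm, ← map_sub] using PiLp.norm_apply_le (x - y) i

theorem koppelman_kernel_difference_holder_general
    (n N : ℕ)
    [MeasurableSpace (EuclideanSpace ℂ (Fin N))] [BorelSpace (EuclideanSpace ℂ (Fin N))]
    (μ : Measure (EuclideanSpace ℂ (Fin N))) [IsFiniteMeasure μ]
    (C₀ R : ℝ) (hR : 0 < R)
    (hAhlfors : ∀ (w : EuclideanSpace ℂ (Fin N)) (ρ : ℝ), 0 < ρ → ρ ≤ R →
      μ (ball w ρ) ≤ ENNReal.ofReal (C₀ * ρ ^ (2 * n)))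
    (γ : ℕ) (hγ : γ < 2 * n) (i : Fin N)
    (ktilde : EuclideanSpace ℂ (Fin N) → EuclideanSpace ℂ (Fin N) → ℂ)
    (hktilde : ∀ ζ z, ktilde ζ z =
      ((‖z‖ ^ γ / ‖ζ‖ ^ γ : ℝ) : ℂ) * (starRingEnd ℂ) (ζ i - z i) /
        ((‖ζ - z‖ ^ (2 * n) : ℝ) : ℂ)) :
    ∀ (α : ℝ), 0 ≤ α → α < 1 → ∀ R₀ : ℝ, 0 < R₀ →
      ∃ C : ℝ, 0 < C ∧
        ∀ z ∈ closedBall (0 : EuclideanSpace ℂ (Fin N)) R₀,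
          ∀ w ∈ closedBall (0 : EuclideanSpace ℂ (Fin N)) R₀,
            z ≠ w → z ≠ 0 → w ≠ 0 →
              (∫⁻ ζ, ENNReal.ofReal ‖ktilde ζ z - ktilde ζ w‖ ∂μ) ≤
                ENNReal.ofReal (C * ‖z - w‖ ^ α) := by
  intro α hα₀ hα₁ _ _
  have hkernel : ktilde = weightedKernel (fun v => starRingEnd ℂ (v i)) γ (2 * n) := by
    ext ζ z
    rw [hktilde, weightedKernel, homogeneousKernel, mul_div_assoc]
    rfl
  set s : ℝ := ((2 * n : ℕ) : ℝ) - 1 + α with hs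
  have h2n : (2 : ℝ) ≤ ((2 * n : ℕ) : ℝ) := by exact_mod_cast (by omega : 2 ≤ 2 * n)
  obtain ⟨K, hK⟩ := exists_lintegral_rpow_neg_le (μ := μ) (s := s) hR (by linarith)
    (by linarith) hAhlfors
  set A : ℝ := 2 ^ γ * (γ + ((2 * n : ℕ) : ℝ) + 1)
  refine ⟨A * (3 * K + 1), by positivity, fun z _ w _ _ _ _ => ?_⟩
  have hA : 0 ≤ A * ‖z - w‖ ^ α := by positivity
  have hnull := measure_singleton_eq_zero_of_measure_ball_le hR (by omega) hAhlfors
  have hpoint : ∀ᵐ ζ ∂μ, ‖ktilde ζ z - ktilde ζ w‖ ≤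
      A * ‖z - w‖ ^ α * (‖ζ - z‖ ^ (-s) + ‖ζ - w‖ ^ (-s) + ‖ζ - 0‖ ^ (-s)) := by
    filter_upwards [measure_eq_zero_iff_ae_notMem.mp (hnull 0),
      measure_eq_zero_iff_ae_notMem.mp (hnull z), measure_eq_zero_iff_ae_notMem.mp (hnull w)]
      with ζ h0 hz hw
    rw [hkernel, sub_zero]
    exact norm_weightedKernel_sub_le_rpow (lipschitzWith_conj_apply i) (by simp) hγ hα₀ hα₁.le
      h0 hz hw
  refine (lintegral_le_of_ae_le_rpow_neg_add hK hA hpoint).trans (ENNReal.ofReal_le_ofReal ?_)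
  nlinarith

/-- Hölder-type estimate for the difference of the Andersson–Samuelsson model kernel
`k̃_γ(ζ,z) = (‖z‖^γ/‖ζ‖^γ) · conj(ζᵢ - zᵢ)/‖ζ-z‖^{2n}` at two points `z, w`:
the `μ`-integral of `|k̃_γ(ζ,z) − k̃_γ(ζ,w)|` is bounded by `C ‖z-w‖^α` for every `α < 1`. -/
theorem koppelman_kernel_difference_holder
    (n N : ℕ) (hn : 1 ≤ n) (hN : 1 ≤ N)
    [MeasurableSpace (EuclideanSpace ℂ (Fin N))] [BorelSpace (EuclideanSpace ℂ (Fin N))]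
    (μ : Measure (EuclideanSpace ℂ (Fin N))) [IsFiniteMeasure μ]
    (R₁ : ℝ) (hsupp : μ ((closedBall (0 : EuclideanSpace ℂ (Fin N)) R₁)ᶜ) = 0)
    (C₀ R : ℝ) (hC₀ : 0 < C₀) (hR : 0 < R)
    (hAhlfors : ∀ (w : EuclideanSpace ℂ (Fin N)) (ρ : ℝ), 0 < ρ → ρ ≤ R →
      μ (ball w ρ) ≤ ENNReal.ofReal (C₀ * ρ ^ (2 * n)))
    (γ : ℕ) (hγ : γ < 2 * n) (i : Fin N)
    (ktilde : EuclideanSpace ℂ (Fin N) → EuclideanSpace ℂ (Fin N) → ℂ)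
    (hktilde : ∀ ζ z, ktilde ζ z =
      ((‖z‖ ^ γ / ‖ζ‖ ^ γ : ℝ) : ℂ) * (starRingEnd ℂ) (ζ i - z i) /
        ((‖ζ - z‖ ^ (2 * n) : ℝ) : ℂ)) :
    ∀ (α : ℝ), 0 ≤ α → α < 1 → ∀ R₀ : ℝ, 0 < R₀ →
      ∃ C : ℝ, 0 < C ∧
        ∀ z ∈ closedBall (0 : EuclideanSpace ℂ (Fin N)) R₀,
          ∀ w ∈ closedBall (0 : EuclideanSpace ℂ (Fin N)) R₀,
            z ≠ w → z ≠ 0 → w ≠ 0 →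
              (∫⁻ ζ, ENNReal.ofReal ‖ktilde ζ z - ktilde ζ w‖ ∂μ) ≤
                ENNReal.ofReal (C * ‖z - w‖ ^ α) :=
  koppelman_kernel_difference_holder_general n N μ C₀ R hR hAhlfors γ hγ i ktilde hktilde
end

section
/- Let n ≥ 1 and N ≥ 1 be integers, and let μ be a Borel measure on ℂ^N for which there are constants C₀ > 0 and R > 0 with μ(B_ρ(w)) ≤ C₀ ρ^{2n} for every w ∈ ℂ^N and every 0 < ρ ≤ R. For an integer k ≥ 1 set r_k := exp(−e^k). Then ∫_{{ ζ : r_{k+1} ≤ ‖ζ‖ ≤ r_k }} dμ(ζ) / ( ‖ζ‖^{2n} · |log ‖ζ‖|^{2n} ) → 0 as k → ∞. -/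
open MeasureTheory Metric Filter
open scoped NNReal ENNReal Topology

/-!
Cut the punctured ball `{0 < ‖ζ‖ ≤ e^{-m}}` into the shells `e^{-(j+1)} ≤ ‖ζ‖ ≤ e^{-j}`, `j ≥ m`.
On the `j`-th shell the integrand is at most `(e^{j+1}/j)^{2n}`, while the shell lies in the ball
of radius `2e^{-j}`, of measure at most `C₀ (2e^{-j})^{2n}`; so the shell contributes at most
`C₀ (2e/j)^{2n}`, a summable sequence since `2n ≥ 2`. The annulus `r_{k+1} ≤ ‖ζ‖ ≤ r_k` lies in
the punctured ball with `m = ⌊e^k⌋`, so its integral is bounded by a tail of a convergent series.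
-/

open Real

section Shells

variable {E : Type*} [SeminormedAddCommGroup E]

def logShell (j : ℕ) : Set E := {ζ | exp (-((j : ℝ) + 1)) ≤ ‖ζ‖ ∧ ‖ζ‖ ≤ exp (-(j : ℝ))}

theorem logShell_subset_ball (j : ℕ) : (logShell j : Set E) ⊆ ball 0 (2 * exp (-(j : ℝ))) :=
  fun _ hζ => mem_ball_zero_iff.2 <| hζ.2.trans_lt <| by linarith [exp_pos (-(j : ℝ))]

theorem mem_logShell_floor_neg_log {ζ : E} (h₀ : 0 < ‖ζ‖) (h₁ : ‖ζ‖ ≤ 1) :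
    ζ ∈ logShell ⌊-log ‖ζ‖⌋₊ := by
  have ht : 0 ≤ -log ‖ζ‖ := neg_nonneg.2 (log_nonpos h₀.le h₁)
  constructor
  · calc exp (-((⌊-log ‖ζ‖⌋₊ : ℝ) + 1)) ≤ exp (log ‖ζ‖) :=
          exp_le_exp.2 (by linarith [Nat.lt_floor_add_one (-log ‖ζ‖)])
      _ = ‖ζ‖ := exp_log h₀
  · calc ‖ζ‖ = exp (log ‖ζ‖) := (exp_log h₀).symm
      _ ≤ exp (-(⌊-log ‖ζ‖⌋₊ : ℝ)) := exp_le_exp.2 (by linarith [Nat.floor_le ht])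

theorem punctured_closedBall_subset_iUnion_logShell (m : ℕ) :
    {ζ : E | 0 < ‖ζ‖ ∧ ‖ζ‖ ≤ exp (-(m : ℝ))} ⊆ ⋃ j : ℕ, logShell (j + m) := by
  intro ζ ⟨h₀, hm⟩
  have hlog : (m : ℝ) ≤ -log ‖ζ‖ := by
    linarith [(log_le_log h₀ hm).trans_eq (log_exp _)]
  have hfloor : m ≤ ⌊-log ‖ζ‖⌋₊ := Nat.le_floor hlog
  refine Set.mem_iUnion.2 ⟨⌊-log ‖ζ‖⌋₊ - m, ?_⟩
  rw [Nat.sub_add_cancel hfloor]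
  exact mem_logShell_floor_neg_log h₀ (hm.trans (exp_le_one_iff.2 (by simp)))

theorem one_div_norm_pow_mul_abs_log_pow_le {ζ : E} {j : ℕ} (hj : 1 ≤ j) (hζ : ζ ∈ logShell j)
    (d : ℕ) : 1 / (‖ζ‖ ^ d * |log ‖ζ‖| ^ d) ≤ (exp ((j : ℝ) + 1) / j) ^ d := by
  have hj₀ : (0 : ℝ) < j := by exact_mod_cast hj
  have h₀ : 0 < ‖ζ‖ := (exp_pos _).trans_le hζ.1
  have hlog : (j : ℝ) ≤ |log ‖ζ‖| := by
    have : log ‖ζ‖ ≤ -(j : ℝ) := (log_le_log h₀ hζ.2).trans_eq (log_exp _)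
    exact (le_neg.1 this).trans (neg_le_abs _)
  have hprod : exp (-((j : ℝ) + 1)) * j ≤ ‖ζ‖ * |log ‖ζ‖| :=
    mul_le_mul hζ.1 hlog hj₀.le h₀.le
  rw [← mul_pow, one_div, ← inv_pow]
  refine pow_le_pow_left₀ (by positivity) ?_ d
  calc (‖ζ‖ * |log ‖ζ‖|)⁻¹ ≤ (exp (-((j : ℝ) + 1)) * j)⁻¹ :=
        inv_anti₀ (by positivity) hprod
    _ = exp ((j : ℝ) + 1) / j := by rw [mul_inv, exp_neg, inv_inv, div_eq_mul_inv]

end Shells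

section Integral

variable {E : Type*} [SeminormedAddCommGroup E] [MeasurableSpace E] {μ : Measure E} {d : ℕ}
  {C₀ R : ℝ}

theorem setLIntegral_logShell_le {j : ℕ} (hj : 1 ≤ j)
    (hball : μ (ball 0 (2 * exp (-(j : ℝ)))) ≤ ENNReal.ofReal (C₀ * (2 * exp (-(j : ℝ))) ^ d)) :
    ∫⁻ ζ in logShell j, ENNReal.ofReal (1 / (‖ζ‖ ^ d * |log ‖ζ‖| ^ d)) ∂μ ≤
      ENNReal.ofReal (C₀ * (2 * exp 1 / j) ^ d) := by
  have hpoint : ∀ ζ ∈ (logShell j : Set E), ENNReal.ofReal (1 / (‖ζ‖ ^ d * |log ‖ζ‖| ^ d)) ≤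
      ENNReal.ofReal ((exp ((j : ℝ) + 1) / j) ^ d) :=
    fun ζ hζ => ENNReal.ofReal_le_ofReal (one_div_norm_pow_mul_abs_log_pow_le hj hζ d)
  have hexp : exp ((j : ℝ) + 1) * exp (-(j : ℝ)) = exp 1 := by rw [← exp_add]; ring_nf
  calc ∫⁻ ζ in logShell j, ENNReal.ofReal (1 / (‖ζ‖ ^ d * |log ‖ζ‖| ^ d)) ∂μ
      ≤ ∫⁻ _ in logShell j, ENNReal.ofReal ((exp ((j : ℝ) + 1) / j) ^ d) ∂μ :=
        setLIntegral_mono measurable_const hpoint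
    _ = ENNReal.ofReal ((exp ((j : ℝ) + 1) / j) ^ d) * μ (logShell j) := setLIntegral_const _ _
    _ ≤ ENNReal.ofReal ((exp ((j : ℝ) + 1) / j) ^ d) *
          ENNReal.ofReal (C₀ * (2 * exp (-(j : ℝ))) ^ d) :=
        mul_le_mul_right ((measure_mono (logShell_subset_ball j)).trans hball) _
    _ = ENNReal.ofReal (C₀ * (2 * exp 1 / j) ^ d) := by
        rw [← ENNReal.ofReal_mul (by positivity), ← hexp]
        ring_nf

theorem ENNReal.tsum_ofReal_mul_div_pow_ne_top (C₀ c : ℝ) (hd : 2 ≤ d) :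
    ∑' j : ℕ, ENNReal.ofReal (C₀ * (c / j) ^ d) ≠ ∞ := by
  have hsum : Summable fun j : ℕ => C₀ * (c / j) ^ d := by
    simpa only [div_pow, mul_one_div, mul_div_assoc] using
      ((Real.summable_one_div_nat_pow.2 hd).mul_left (C₀ * c ^ d))
  exact ENNReal.tsum_coe_ne_top_iff_summable.2 hsum.toNNReal

theorem setLIntegral_punctured_closedBall_le_tsum
    (hball : ∀ ρ, 0 < ρ → ρ ≤ R → μ (ball 0 ρ) ≤ ENNReal.ofReal (C₀ * ρ ^ d))
    {m : ℕ} (hm : 1 ≤ m) (hmR : 2 * exp (-(m : ℝ)) ≤ R) :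
    ∫⁻ ζ in {ζ : E | 0 < ‖ζ‖ ∧ ‖ζ‖ ≤ exp (-(m : ℝ))},
        ENNReal.ofReal (1 / (‖ζ‖ ^ d * |log ‖ζ‖| ^ d)) ∂μ ≤
      ∑' j : ℕ, ENNReal.ofReal (C₀ * (2 * exp 1 / ↑(j + m)) ^ d) := by
  refine (lintegral_mono_set (punctured_closedBall_subset_iUnion_logShell m)).trans <|
    (lintegral_iUnion_le _ _).trans <| ENNReal.tsum_le_tsum fun j => ?_
  refine setLIntegral_logShell_le (by omega) (hball _ (by positivity) (hmR.trans' ?_))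
  gcongr
  simp

end Integral

theorem cutoff_derivative_L2n_tendsto_zero_general
    (n N : ℕ) (hn : 1 ≤ n)
    [MeasurableSpace (EuclideanSpace ℂ (Fin N))]
    (μ : Measure (EuclideanSpace ℂ (Fin N)))
    (C₀ R : ℝ) (hR : 0 < R)
    (hAhlfors : ∀ (w : EuclideanSpace ℂ (Fin N)) (ρ : ℝ), 0 < ρ → ρ ≤ R →
      μ (ball w ρ) ≤ ENNReal.ofReal (C₀ * ρ ^ (2 * n))) :
    Tendsto
      (fun k : ℕ =>
        ∫⁻ ζ in {ζ : EuclideanSpace ℂ (Fin N) |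
            Real.exp (-Real.exp (k + 1)) ≤ ‖ζ‖ ∧ ‖ζ‖ ≤ Real.exp (-Real.exp k)},
          ENNReal.ofReal (1 / (‖ζ‖ ^ (2 * n) * |Real.log ‖ζ‖| ^ (2 * n))) ∂μ)
      atTop (𝓝 0) := by
  set m : ℕ → ℕ := fun k => ⌊exp k⌋₊
  have hm : Tendsto m atTop atTop :=
    tendsto_nat_floor_atTop.comp (tendsto_exp_atTop.comp tendsto_natCast_atTop_atTop)
  have hsmall : ∀ᶠ j : ℕ in atTop, 1 ≤ j ∧ 2 * exp (-(j : ℝ)) ≤ R := by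
    have h := (tendsto_exp_neg_atTop_nhds_zero.comp tendsto_natCast_atTop_atTop).const_mul 2
    rw [mul_zero] at h
    exact (eventually_ge_atTop 1).and ((h.eventually_lt_const hR).mono fun _ => le_of_lt)
  have htail := (ENNReal.tendsto_sum_nat_add _
    (ENNReal.tsum_ofReal_mul_div_pow_ne_top C₀ (2 * exp 1) (d := 2 * n) (by omega))).comp hm
  refine tendsto_of_tendsto_of_tendsto_of_le_of_le' tendsto_const_nhds htail
    (Eventually.of_forall fun _ => zero_le) ?_
  filter_upwards [hm.eventually hsmall] with k ⟨hk, hkR⟩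
  have hannulus : {ζ : EuclideanSpace ℂ (Fin N) |
      exp (-exp (k + 1)) ≤ ‖ζ‖ ∧ ‖ζ‖ ≤ exp (-exp k)} ⊆ {ζ | 0 < ‖ζ‖ ∧ ‖ζ‖ ≤ exp (-(m k : ℝ))} :=
    fun _ ⟨hlow, hup⟩ => ⟨(exp_pos _).trans_le hlow,
      hup.trans (exp_le_exp.2 (neg_le_neg (Nat.floor_le (exp_pos _).le)))⟩
  exact (lintegral_mono_set hannulus).trans
    (setLIntegral_punctured_closedBall_le_tsum (hAhlfors 0) hk hkR)

/-- The `L^{2n}`-norm (to the `2n`-th power) of the derivative of the logarithmic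
cut-off functions tends to `0`: the integral of `1/(‖ζ‖^{2n} |log ‖ζ‖|^{2n})` over the
annulus `{r_{k+1} ≤ ‖ζ‖ ≤ r_k}`, `r_k = exp(−e^k)`, tends to `0` as `k → ∞`, for a
measure with an upper Ahlfors regularity bound of exponent `2n`. -/
theorem cutoff_derivative_L2n_tendsto_zero
    (n N : ℕ) (hn : 1 ≤ n) (hN : 1 ≤ N)
    [MeasurableSpace (EuclideanSpace ℂ (Fin N))] [BorelSpace (EuclideanSpace ℂ (Fin N))]
    (μ : Measure (EuclideanSpace ℂ (Fin N)))
    (C₀ R : ℝ) (hC₀ : 0 < C₀) (hR : 0 < R)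
    (hAhlfors : ∀ (w : EuclideanSpace ℂ (Fin N)) (ρ : ℝ), 0 < ρ → ρ ≤ R →
      μ (ball w ρ) ≤ ENNReal.ofReal (C₀ * ρ ^ (2 * n))) :
    Tendsto
      (fun k : ℕ =>
        ∫⁻ ζ in {ζ : EuclideanSpace ℂ (Fin N) |
            Real.exp (-Real.exp (k + 1)) ≤ ‖ζ‖ ∧ ‖ζ‖ ≤ Real.exp (-Real.exp k)},
          ENNReal.ofReal (1 / (‖ζ‖ ^ (2 * n) * |Real.log ‖ζ‖| ^ (2 * n))) ∂μ)
      atTop (𝓝 0) :=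
  cutoff_derivative_L2n_tendsto_zero_general n N hn μ C₀ R hR hAhlfors
end
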